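/- arXiv:1812.08394 — 7 statements merged into one kernel-verified Lean document; each statement's English description precedes it below -/
import Mathlib

section
/- Let 0<q<∞ and let φ:(0,∞)→[0,∞) satisfy φ(t₀)≠0 for some t₀>0. Then the following three statements are equivalent: (a) every essentially bounded compactly supported measurable function f:ℝⁿ→ℂ satisfies ‖f‖_{M^φ_q} < ∞; (b) there exists a measurable function f with ‖f‖_{M^φ_q} < ∞ and f not equal to 0 almost everywhere; (c) sup_{t>0} φ(t)·min(t^{−n/q},1) < ∞. -/
/-!
The Morrey norm of `f` is at most `K` iff `φ(r)^q ∫_{Q(x,r)} |f|^q ≤ K^q |Q(x,r)|` for every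
cube, and (c) says `φ(t)^q ≲ max(t, 1)^n`. For `f` bounded by `D` and supported in `Q(0,R)`,
`R ≥ 1`, a cube of radius `r ≤ 1` carries at most `D^q |Q(x,r)|` and a larger one at most
`D^q |Q(0,R)|`, which gives (c) ⇒ (a); (a) ⇒ (b) is witnessed by the indicator of a cube.
For (b) ⇒ (c), choose `r₀` with `B = ∫_{Q(0,r₀)} |f|^q > 0`. Averaging `∫_{Q(v,t)}` over all
centres `v` gives `|Q(0,t)| B`, while, with `M` the Morrey norm of `f`, each of these integrals
is at most `(M/φ(t))^q |Q(0,t)|` and vanishes unless `v ∈ Q(0,r₀+t)`; hence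
`φ(t)^q B ≤ M^q |Q(0,r₀+t)| ≲ max(t, 1)^n`.
-/

open MeasureTheory Set
open scoped ENNReal NNReal

/-- The generalized Morrey norm `‖f‖_{M^φ_q}` on `ℝⁿ` (cubes realized as closed balls
for the sup metric on `Fin n → ℝ`). -/
noncomputable def morreyNorm (n : ℕ) (q : ℝ) (φ : ℝ → ℝ)
    (f : (Fin n → ℝ) → ℂ) : ℝ≥0∞ :=
  ⨆ (x : Fin n → ℝ) (r : ℝ) (_ : 0 < r),
    ENNReal.ofReal (φ r) *
      ((volume (Metric.closedBall x r))⁻¹ *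
        ∫⁻ y in Metric.closedBall x r, (‖f y‖₊ : ℝ≥0∞) ^ q) ^ (1 / q)

open Metric

section AddHaar

variable {E : Type*} [NormedAddCommGroup E] [NormedSpace ℝ E] [FiniteDimensional ℝ E]
  [MeasurableSpace E] [BorelSpace E] (μ : Measure E) [μ.IsAddHaarMeasure]

theorem lintegral_setLIntegral_closedBall {g : E → ℝ≥0∞} (hg : Measurable g) (t : ℝ) :
    ∫⁻ v, ∫⁻ y in closedBall v t, g y ∂μ ∂μ = μ (closedBall 0 t) * ∫⁻ y, g y ∂μ := by
  set S := {p : E × E | dist p.1 p.2 ≤ t}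
  have hS : MeasurableSet S := measurableSet_le measurable_dist measurable_const
  calc ∫⁻ v, ∫⁻ y in closedBall v t, g y ∂μ ∂μ
      = ∫⁻ v, ∫⁻ y, S.indicator (fun p => g p.2) (v, y) ∂μ ∂μ := by
        refine lintegral_congr fun v => ?_
        rw [← lintegral_indicator measurableSet_closedBall]
        refine lintegral_congr fun y => ?_
        simp only [indicator, S, mem_closedBall, mem_ofPred_eq, dist_comm y v]
    _ = ∫⁻ y, ∫⁻ v, S.indicator (fun p => g p.2) (v, y) ∂μ ∂μ :=
        lintegral_lintegral_swap ((hg.comp measurable_snd).indicator hS).aemeasurable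
    _ = ∫⁻ y, μ (closedBall 0 t) * g y ∂μ := by
        refine lintegral_congr fun y => ?_
        have hslice : (fun v => S.indicator (fun p => g p.2) (v, y)) =
            (closedBall y t).indicator fun _ => g y := by
          ext v
          simp only [indicator, S, mem_closedBall, mem_ofPred_eq]
        rw [hslice, lintegral_indicator_const measurableSet_closedBall,
          Measure.addHaar_closedBall_center, mul_comm]
    _ = μ (closedBall 0 t) * ∫⁻ y, g y ∂μ := lintegral_const_mul _ hg

theorem lintegral_le_of_setLIntegral_closedBall_le {g : E → ℝ≥0∞} (hg : Measurable g) {ρ t : ℝ}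
    (hgρ : Function.support g ⊆ closedBall 0 ρ) (ht : 0 < t) {c : ℝ≥0∞}
    (hc : ∀ v, ∫⁻ y in closedBall v t, g y ∂μ ≤ c * μ (closedBall v t)) :
    ∫⁻ y, g y ∂μ ≤ c * μ (closedBall 0 (ρ + t)) := by
  have hvanish : ∀ v ∉ closedBall (0 : E) (ρ + t), ∫⁻ y in closedBall v t, g y ∂μ = 0 := by
    intro v hv
    refine setLIntegral_eq_zero measurableSet_closedBall fun y hy => ?_
    by_contra hgy
    refine hv (mem_closedBall.2 ?_)
    calc dist v 0 ≤ dist v y + dist y 0 := dist_triangle _ _ _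
      _ ≤ t + ρ := add_le_add (mem_closedBall'.1 hy) (hgρ hgy)
      _ = ρ + t := add_comm _ _
  have hbound : ∀ v, ∫⁻ y in closedBall v t, g y ∂μ ≤
      (closedBall (0 : E) (ρ + t)).indicator (fun _ => c * μ (closedBall 0 t)) v := by
    intro v
    by_cases hv : v ∈ closedBall (0 : E) (ρ + t)
    · rw [indicator_of_mem hv, ← Measure.addHaar_closedBall_center μ v]
      exact hc v
    · rw [indicator_of_notMem hv, hvanish v hv]
  have hpos : μ (closedBall 0 t) ≠ 0 := (measure_closedBall_pos _ _ ht).ne'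
  have hfin : μ (closedBall 0 t) ≠ ⊤ := measure_closedBall_lt_top.ne
  rw [← ENNReal.mul_le_mul_iff_right hpos hfin, ← lintegral_setLIntegral_closedBall μ hg]
  calc ∫⁻ v, ∫⁻ y in closedBall v t, g y ∂μ ∂μ
      ≤ ∫⁻ v, (closedBall (0 : E) (ρ + t)).indicator (fun _ => c * μ (closedBall 0 t)) v ∂μ :=
        lintegral_mono hbound
    _ = μ (closedBall 0 t) * (c * μ (closedBall 0 (ρ + t))) := by
        rw [lintegral_indicator_const measurableSet_closedBall]; ring

theorem exists_bounded_hasCompactSupport_not_ae_eq_zero :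
    ∃ g : E → ℂ, Measurable g ∧ HasCompactSupport g ∧ (∀ y, ‖g y‖ ≤ 1) ∧ ¬ g =ᵐ[μ] 0 := by
  refine ⟨(closedBall (0 : E) 1).indicator 1, measurable_one.indicator measurableSet_closedBall,
    HasCompactSupport.intro (isCompact_closedBall 0 1) fun y hy => indicator_of_notMem hy _,
    fun y => ?_, fun h => ?_⟩
  · by_cases hy : y ∈ closedBall (0 : E) 1 <;> simp [hy]
  · refine (measure_closedBall_pos μ (0 : E) one_pos).ne' (measure_mono_null (fun y hy => ?_)
      (ae_iff.1 h))
    simpa using hy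

end AddHaar

theorem exists_setLIntegral_closedBall_ne_zero {α : Type*} [PseudoMetricSpace α]
    [MeasurableSpace α] {μ : Measure α} {g : α → ℝ≥0∞} (hg : AEMeasurable g μ)
    (hne : ¬ g =ᵐ[μ] 0) (x : α) : ∃ k : ℕ, ∫⁻ y in closedBall x k, g y ∂μ ≠ 0 := by
  by_contra! h
  refine hne ?_
  have hball : ∀ k : ℕ, g =ᵐ[μ.restrict (closedBall x k)] 0 := fun k =>
    (lintegral_eq_zero_iff' hg.restrict).1 (h k)
  have := (ae_restrict_iUnion_iff (fun k : ℕ => closedBall x k) fun y => g y = 0).2 hball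
  rwa [iUnion_closedBall_nat, Measure.restrict_univ] at this

theorem setLIntegral_nnnorm_rpow_le {α E : Type*} [MeasurableSpace α] {μ : Measure α}
    [NormedAddCommGroup E] {f : α → E} {K : Set α} (hK : MeasurableSet K)
    (hfK : Function.support f ⊆ K) {D q : ℝ} (hD : ∀ᵐ y ∂μ, ‖f y‖ ≤ D) (hq : 0 < q)
    (S : Set α) :
    ∫⁻ y in S, (‖f y‖₊ : ℝ≥0∞) ^ q ∂μ ≤ ENNReal.ofReal D ^ q * μ (K ∩ S) := by
  have hpoint : ∀ᵐ y ∂μ, (‖f y‖₊ : ℝ≥0∞) ^ q ≤ K.indicator (fun _ => ENNReal.ofReal D ^ q) y := by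
    filter_upwards [hD] with y hy
    by_cases hyK : y ∈ K
    · rw [indicator_of_mem hyK, ← enorm_eq_nnnorm, ← ofReal_norm]
      exact ENNReal.rpow_le_rpow (ENNReal.ofReal_le_ofReal hy) hq.le
    · rw [Function.notMem_support.1 fun h => hyK (hfK h), nnnorm_zero, ENNReal.coe_zero,
        ENNReal.zero_rpow_of_pos hq]
      exact zero_le
  calc ∫⁻ y in S, (‖f y‖₊ : ℝ≥0∞) ^ q ∂μ
      ≤ ∫⁻ y in S, K.indicator (fun _ => ENNReal.ofReal D ^ q) y ∂μ :=
        lintegral_mono_ae (ae_restrict_of_ae hpoint)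
    _ = ENNReal.ofReal D ^ q * μ (K ∩ S) := by
        rw [lintegral_indicator_const hK, Measure.restrict_apply hK]

theorem mul_min_rpow_neg_le_iff {n : ℕ} {q t x C : ℝ} (hq : 0 < q) (ht : 0 < t) (hC : 0 ≤ C) :
    x * min (t ^ (-((n : ℝ) / q))) 1 ≤ C ↔
      ENNReal.ofReal x ^ q ≤ ENNReal.ofReal C ^ q * ENNReal.ofReal (max t 1) ^ n := by
  set m := max t 1
  have hm : 0 < m := lt_of_lt_of_le one_pos (le_max_right _ _)
  have ha : 0 ≤ (n : ℝ) / q := by positivity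
  have hmin : min (t ^ (-((n : ℝ) / q))) 1 = m ^ (-((n : ℝ) / q)) := by
    rcases le_total t 1 with ht1 | ht1
    · rw [show m = 1 from max_eq_right ht1, Real.one_rpow, min_eq_right
        (Real.one_le_rpow_of_pos_of_le_one_of_nonpos ht ht1 (neg_nonpos.2 ha))]
    · rw [show m = t from max_eq_left ht1, min_eq_left
        (Real.rpow_le_one_of_one_le_of_nonpos ht1 (neg_nonpos.2 ha))]
  rw [hmin]
  rcases le_or_gt x 0 with hx | hx
  · refine iff_of_true ((mul_nonpos_of_nonpos_of_nonneg hx (by positivity)).trans hC) ?_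
    rw [ENNReal.ofReal_of_nonpos hx, ENNReal.zero_rpow_of_pos hq]
    exact zero_le
  have hpow : (C * m ^ ((n : ℝ) / q)) ^ q = C ^ q * m ^ n := by
    rw [Real.mul_rpow hC (by positivity), ← Real.rpow_mul hm.le, div_mul_cancel₀ _ hq.ne',
      Real.rpow_natCast]
  rw [Real.rpow_neg hm.le, ← div_eq_mul_inv, div_le_iff₀ (by positivity),
    ← Real.rpow_le_rpow_iff hx.le (by positivity) hq, hpow,
    ENNReal.ofReal_rpow_of_nonneg hx.le hq.le, ENNReal.ofReal_rpow_of_nonneg hC hq.le,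
    ← ENNReal.ofReal_pow hm.le, ← ENNReal.ofReal_mul (by positivity),
    ENNReal.ofReal_le_ofReal_iff (by positivity)]

theorem exists_mul_min_rpow_neg_le_iff {n : ℕ} {q : ℝ} {φ : ℝ → ℝ} (hq : 0 < q) :
    (∃ C : ℝ, ∀ t, 0 < t → φ t * min (t ^ (-((n : ℝ) / q))) 1 ≤ C) ↔
      ∃ c ≠ ⊤, ∀ t > 0, ENNReal.ofReal (φ t) ^ q ≤ c * ENNReal.ofReal (max t 1) ^ n := by
  constructor
  · rintro ⟨C, hC⟩
    refine ⟨ENNReal.ofReal (max C 0) ^ q,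
      ENNReal.rpow_ne_top_of_nonneg hq.le ENNReal.ofReal_ne_top, fun t ht => ?_⟩
    exact (mul_min_rpow_neg_le_iff hq ht (le_max_right _ _)).1 ((hC t ht).trans (le_max_left _ _))
  · rintro ⟨c, hc, hφ⟩
    refine ⟨c.toReal ^ q⁻¹, fun t ht => (mul_min_rpow_neg_le_iff hq ht (by positivity)).2 ?_⟩
    rw [← ENNReal.ofReal_rpow_of_nonneg ENNReal.toReal_nonneg (inv_nonneg.2 hq.le),
      ENNReal.ofReal_toReal hc, ENNReal.rpow_inv_rpow hq.ne']
    exact hφ t ht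

theorem volume_closedBall_fin {n : ℕ} (x : Fin n → ℝ) {r : ℝ} (hr : 0 ≤ r) :
    volume (closedBall x r) = ENNReal.ofReal (2 * r) ^ n := by
  rw [Real.volume_pi_closedBall x hr, Fintype.card_fin, ENNReal.ofReal_pow (by positivity)]

theorem morreyNorm_le_iff {n : ℕ} {q : ℝ} {φ : ℝ → ℝ} {f : (Fin n → ℝ) → ℂ} {K : ℝ≥0∞}
    (hq : 0 < q) :
    morreyNorm n q φ f ≤ K ↔ ∀ x, ∀ r > 0,
      ENNReal.ofReal (φ r) ^ q * ∫⁻ y in closedBall x r, (‖f y‖₊ : ℝ≥0∞) ^ q ≤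
        K ^ q * volume (closedBall x r) := by
  simp only [morreyNorm, iSup_le_iff]
  refine forall_congr' fun x => forall_congr' fun r => forall_congr' fun hr => ?_
  have hv₀ : volume (closedBall x r) ≠ 0 := (measure_closedBall_pos _ _ hr).ne'
  have hv : volume (closedBall x r) ≠ ⊤ := measure_closedBall_lt_top.ne
  rw [← ENNReal.rpow_le_rpow_iff hq, ENNReal.mul_rpow_of_nonneg _ _ hq.le, one_div,
    ENNReal.rpow_inv_rpow hq.ne', mul_left_comm, ENNReal.inv_mul_le_iff hv₀ hv, mul_comm _ (K ^ q)]

theorem exists_rpow_le_of_morreyNorm_ne_top {n : ℕ} {q : ℝ} {φ : ℝ → ℝ}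
    {f : (Fin n → ℝ) → ℂ} (hq : 0 < q) (hf : Measurable f) (hM : morreyNorm n q φ f ≠ ⊤)
    (hne : ¬ f =ᵐ[volume] 0) :
    ∃ c ≠ ⊤, ∀ t > 0, ENNReal.ofReal (φ t) ^ q ≤ c * ENNReal.ofReal (max t 1) ^ n := by
  set F : (Fin n → ℝ) → ℝ≥0∞ := fun y => (‖f y‖₊ : ℝ≥0∞) ^ q
  have hF : Measurable F := hf.nnnorm.coe_nnreal_ennreal.pow_const q
  have hFne : ¬ F =ᵐ[volume] 0 := fun h => hne <| h.mono fun y hy => by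
    simpa [F, ENNReal.rpow_eq_zero_iff_of_pos hq] using hy
  obtain ⟨k, hk⟩ := exists_setLIntegral_closedBall_ne_zero hF.aemeasurable hFne 0
  set M := morreyNorm n q φ f
  set B := ∫⁻ y in closedBall 0 k, F y
  set X := M ^ q * ENNReal.ofReal (2 * (k + 1)) ^ n
  have hX : X ≠ ⊤ := ENNReal.mul_ne_top (ENNReal.rpow_ne_top_of_nonneg hq.le hM)
    (ENNReal.pow_ne_top ENNReal.ofReal_ne_top)
  refine ⟨X / B, ENNReal.div_ne_top hX hk, fun t ht => ?_⟩
  set a := ENNReal.ofReal (φ t) ^ q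
  set G := fun y => a * (closedBall 0 (k : ℝ)).indicator F y
  have hG : Measurable G := (hF.indicator measurableSet_closedBall).const_mul a
  have hGsupp : Function.support G ⊆ closedBall 0 k :=
    (Function.support_mul_subset_right (fun _ => a) _).trans support_indicator_subset
  have hGloc : ∀ v, ∫⁻ y in closedBall v t, G y ≤ M ^ q * volume (closedBall v t) := fun v =>
    calc ∫⁻ y in closedBall v t, G y
        ≤ ∫⁻ y in closedBall v t, a * F y :=
          lintegral_mono fun y => mul_le_mul_right (indicator_le_self _ _ y) a
      _ = a * ∫⁻ y in closedBall v t, F y := lintegral_const_mul _ hF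
      _ ≤ M ^ q * volume (closedBall v t) := (morreyNorm_le_iff hq).1 le_rfl v t ht
  have hball : a * B ≤ M ^ q * volume (closedBall (0 : Fin n → ℝ) (k + t)) := by
    have := lintegral_le_of_setLIntegral_closedBall_le volume hG hGsupp ht hGloc
    rwa [lintegral_const_mul _ (hF.indicator measurableSet_closedBall),
      lintegral_indicator measurableSet_closedBall] at this
  have hvol : volume (closedBall (0 : Fin n → ℝ) (k + t)) ≤
      ENNReal.ofReal (2 * (k + 1)) ^ n * ENNReal.ofReal (max t 1) ^ n := by
    rw [volume_closedBall_fin _ (by positivity), ← mul_pow, ← ENNReal.ofReal_mul (by positivity)]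
    refine pow_le_pow_left' (ENNReal.ofReal_le_ofReal ?_) n
    nlinarith [le_max_left t 1, le_max_right t 1, (k.cast_nonneg : (0 : ℝ) ≤ k)]
  rw [div_eq_mul_inv, mul_right_comm, ← div_eq_mul_inv,
    ENNReal.le_div_iff_mul_le (Or.inl hk) (Or.inr (ENNReal.mul_ne_top hX
      (ENNReal.pow_ne_top ENNReal.ofReal_ne_top)))]
  calc a * B ≤ M ^ q * volume (closedBall (0 : Fin n → ℝ) (k + t)) := hball
    _ ≤ M ^ q * (ENNReal.ofReal (2 * (k + 1)) ^ n * ENNReal.ofReal (max t 1) ^ n) := by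
        gcongr
    _ = X * ENNReal.ofReal (max t 1) ^ n := by ring

theorem morreyNorm_lt_top_of_rpow_le {n : ℕ} {q : ℝ} {φ : ℝ → ℝ} {f : (Fin n → ℝ) → ℂ}
    (hq : 0 < q) {c : ℝ≥0∞} (hc : c ≠ ⊤)
    (hφ : ∀ t > 0, ENNReal.ofReal (φ t) ^ q ≤ c * ENNReal.ofReal (max t 1) ^ n)
    (hf : HasCompactSupport f) {D : ℝ} (hD : ∀ᵐ y ∂volume, ‖f y‖ ≤ D) :
    morreyNorm n q φ f < ⊤ := by
  obtain ⟨R₀, hR₀⟩ := hf.isBounded.subset_closedBall (0 : Fin n → ℝ)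
  set R := max R₀ 1
  have hfR : Function.support f ⊆ closedBall 0 R :=
    subset_tsupport f |>.trans <| hR₀.trans (closedBall_subset_closedBall (le_max_left _ _))
  have hK : ENNReal.ofReal D ^ q * c * ENNReal.ofReal R ^ n ≠ ⊤ :=
    ENNReal.mul_ne_top (ENNReal.mul_ne_top
      (ENNReal.rpow_ne_top_of_nonneg hq.le ENNReal.ofReal_ne_top) hc)
      (ENNReal.pow_ne_top ENNReal.ofReal_ne_top)
  refine lt_of_le_of_lt ((morreyNorm_le_iff hq).2 fun x r hr => ?_)
    (ENNReal.rpow_lt_top_of_nonneg (inv_nonneg.2 hq.le) hK)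
  rw [ENNReal.rpow_inv_rpow hq.ne']
  have hint := setLIntegral_nnnorm_rpow_le measurableSet_closedBall hfR hD hq (closedBall x r)
  have hφr := hφ r hr
  rcases le_total r 1 with hr1 | hr1
  · rw [max_eq_right hr1, ENNReal.ofReal_one, one_pow, mul_one] at hφr
    calc ENNReal.ofReal (φ r) ^ q * ∫⁻ y in closedBall x r, (‖f y‖₊ : ℝ≥0∞) ^ q
        ≤ c * (ENNReal.ofReal D ^ q * volume (closedBall x r)) :=
          mul_le_mul' hφr (hint.trans (by gcongr; exact inter_subset_right))
      _ = ENNReal.ofReal D ^ q * c * 1 * volume (closedBall x r) := by ring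
      _ ≤ ENNReal.ofReal D ^ q * c * ENNReal.ofReal R ^ n * volume (closedBall x r) := by
          gcongr
          exact one_le_pow₀ (ENNReal.one_le_ofReal.2 (le_max_right _ _))
  · rw [max_eq_left hr1] at hφr
    calc ENNReal.ofReal (φ r) ^ q * ∫⁻ y in closedBall x r, (‖f y‖₊ : ℝ≥0∞) ^ q
        ≤ c * ENNReal.ofReal r ^ n *
            (ENNReal.ofReal D ^ q * volume (closedBall (0 : Fin n → ℝ) R)) :=
          mul_le_mul' hφr (hint.trans (by gcongr; exact inter_subset_left))
      _ = ENNReal.ofReal D ^ q * c * ENNReal.ofReal R ^ n * volume (closedBall x r) := by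
          rw [volume_closedBall_fin _ (by positivity), volume_closedBall_fin _ hr.le,
            ENNReal.ofReal_mul zero_le_two, ENNReal.ofReal_mul zero_le_two, mul_pow, mul_pow]
          ring

theorem morrey_nontrivial_tfae_general (n : ℕ) (q : ℝ) (hq : 0 < q)
    (φ : ℝ → ℝ) :
    ((∀ f : (Fin n → ℝ) → ℂ, Measurable f → HasCompactSupport f →
        (∃ C : ℝ, ∀ᵐ x ∂volume, ‖f x‖ ≤ C) → morreyNorm n q φ f < ⊤) ↔
      (∃ f : (Fin n → ℝ) → ℂ, Measurable f ∧ morreyNorm n q φ f < ⊤ ∧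
        ¬ (f =ᵐ[volume] 0))) ∧
    ((∃ f : (Fin n → ℝ) → ℂ, Measurable f ∧ morreyNorm n q φ f < ⊤ ∧
        ¬ (f =ᵐ[volume] 0)) ↔
      (∃ C : ℝ, ∀ t, 0 < t → φ t * min (t ^ (-((n : ℝ) / q))) 1 ≤ C)) := by
  rw [exists_mul_min_rpow_neg_le_iff hq]
  obtain ⟨g, hg, hgc, hg1, hg0⟩ := exists_bounded_hasCompactSupport_not_ae_eq_zero
    (volume : Measure (Fin n → ℝ))
  refine (fun hab hbc hca => ⟨⟨hab, hca ∘ hbc⟩, hbc, hab ∘ hca⟩) ?_ ?_ ?_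
  · exact fun ha => ⟨g, hg, ha g hg hgc ⟨1, ae_of_all _ hg1⟩, hg0⟩
  · rintro ⟨f, hf, hM, hne⟩
    exact exists_rpow_le_of_morreyNorm_ne_top hq hf hM.ne hne
  · rintro ⟨c, hc, hφ⟩ f - hfc ⟨D, hD⟩
    exact morreyNorm_lt_top_of_rpow_le hq hc hφ hfc hD

/-- for `0<q<∞` and `φ:(0,∞)→[0,∞)` not identically zero,
the following are equivalent: (a) every essentially bounded compactly supported
measurable function has finite generalized Morrey norm; (b) some measurable
function, not a.e. zero, has finite generalized Morrey norm;
(c) `sup_{t>0} φ(t) min(t^{-n/q},1) < ∞`. -/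
theorem morrey_nontrivial_tfae (n : ℕ) (q : ℝ) (hq : 0 < q)
    (φ : ℝ → ℝ) (hφ0 : ∀ t, 0 < t → 0 ≤ φ t)
    (hφ : ∃ t₀, 0 < t₀ ∧ φ t₀ ≠ 0) :
    ((∀ f : (Fin n → ℝ) → ℂ, Measurable f → HasCompactSupport f →
        (∃ C : ℝ, ∀ᵐ x ∂volume, ‖f x‖ ≤ C) → morreyNorm n q φ f < ⊤) ↔
      (∃ f : (Fin n → ℝ) → ℂ, Measurable f ∧ morreyNorm n q φ f < ⊤ ∧
        ¬ (f =ᵐ[volume] 0))) ∧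
    ((∃ f : (Fin n → ℝ) → ℂ, Measurable f ∧ morreyNorm n q φ f < ⊤ ∧
        ¬ (f =ᵐ[volume] 0)) ↔
      (∃ C : ℝ, ∀ t, 0 < t → φ t * min (t ^ (-((n : ℝ) / q))) 1 ≤ C)) :=
  morrey_nontrivial_tfae_general n q hq φ
end

section
/- Let 0<q<∞ and let φ:(0,∞)→[0,∞) satisfy 0 < sup_{t>0} φ(t)·min(t^{−n/q},1) < ∞. Then there exist a function φ* ∈ G_q and a constant C ≥ 1 such that for every measurable f:ℝⁿ→ℂ, C^{−1}‖f‖_{M^{φ*}_q} ≤ ‖f‖_{M^φ_q} ≤ C‖f‖_{M^{φ*}_q}; in particular M^φ_q(ℝⁿ) = M^{φ*}_q(ℝⁿ) with equivalence of norms. -/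
/-!
With `κ = n / q`, the function `φ*(r) = sup_{t > 0} φ(t) min(1, (r / t)^κ)` is the least majorant
of `φ` in `G_q`; the bound on `φ(t) min(t^{-κ}, 1)` makes it finite and `φ(t₀) > 0` makes it
positive. Since `φ ≤ φ*`, one inequality is trivial. For the other, take a term
`φ(t) min(1, (r / t)^κ) ⟨|f|^q⟩_{Q(x,r)}^{1/q}` of `‖f‖_{M^{φ*}_q}`. If `r ≤ t`, then
`Q(x,r) ⊆ Q(x,t)` gives `(r / t)^κ ⟨|f|^q⟩_{Q(x,r)}^{1/q} ≤ ⟨|f|^q⟩_{Q(x,t)}^{1/q}`. If `t ≤ r`,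
covering `Q(x,r)` by `⌈r / t⌉^n ≤ (2r / t)^n` cubes of radius `t` gives
`⟨|f|^q⟩_{Q(x,r)} ≤ 2^n sup_y ⟨|f|^q⟩_{Q(y,t)}`. So `C = 2^κ` works.
-/

open MeasureTheory Set
open scoped ENNReal NNReal

/-- The class `G_q`: nondecreasing functions `φ : (0,∞) → (0,∞)` such that
`t ↦ t^{-n/q} φ(t)` is nonincreasing on `(0,∞)`. -/
def IsGq (n : ℕ) (q : ℝ) (φ : ℝ → ℝ) : Prop :=
  (∀ t, 0 < t → 0 < φ t) ∧
  (∀ s t, 0 < s → s ≤ t → φ s ≤ φ t) ∧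
  (∀ s t, 0 < s → s ≤ t → t ^ (-((n : ℝ) / q)) * φ t ≤ s ^ (-((n : ℝ) / q)) * φ s)

open Metric

noncomputable def cubeAvg {ι : Type*} [Fintype ι] (q : ℝ) (f : (ι → ℝ) → ℂ) (x : ι → ℝ)
    (r : ℝ) : ℝ≥0∞ :=
  (volume (closedBall x r))⁻¹ * ∫⁻ y in closedBall x r, (‖f y‖₊ : ℝ≥0∞) ^ q

theorem exists_lt_ceil_mem_Icc {d D : ℝ} (hd : 0 ≤ d) (hdD : d ≤ D) (hD : 0 < D) :
    ∃ k < ⌈D⌉₊, (k : ℝ) ≤ d ∧ d ≤ k + 1 := by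
  have hceil : 1 ≤ ⌈D⌉₊ := Nat.one_le_ceil_iff.2 hD
  refine ⟨⌈d⌉₊ - 1, by have := Nat.ceil_mono hdD; omega, ?_, ?_⟩
  · rcases Nat.eq_zero_or_pos ⌈d⌉₊ with h | h
    · simp [h, hd]
    · have := Nat.ceil_lt_add_one hd
      rw [Nat.cast_sub h]
      push_cast
      linarith
  · have := Nat.le_ceil d
    have : (⌈d⌉₊ : ℝ) ≤ ((⌈d⌉₊ - 1 : ℕ) : ℝ) + 1 := by exact_mod_cast (by omega)
    linarith

section Cubes

variable {ι : Type*} [Fintype ι]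

theorem closedBall_subset_iUnion_closedBall (x : ι → ℝ) {r s : ℝ} (hr : 0 < r) (hrs : r ≤ s) :
    closedBall x s ⊆
      ⋃ i : ι → Fin ⌈s / r⌉₊, closedBall (fun j => x j - s + (2 * i j + 1) * r) r := by
  have hs : 0 < s := hr.trans_le hrs
  intro y hy
  have hcoord : ∀ j, ∃ k : Fin ⌈s / r⌉₊, |y j - (x j - s + (2 * k + 1) * r)| ≤ r := by
    intro j
    have hyj : |y j - x j| ≤ s := (dist_le_pi_dist y x j).trans (mem_closedBall.1 hy)
    rw [abs_le] at hyj
    have hdD : (y j - x j + s) / (2 * r) ≤ s / r := by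
      rw [div_le_div_iff₀ (by positivity) hr]
      nlinarith
    obtain ⟨k, hk, hkd, hdk⟩ :=
      exists_lt_ceil_mem_Icc (div_nonneg (by linarith) (by positivity)) hdD (by positivity)
    refine ⟨⟨k, hk⟩, abs_le.2 ?_⟩
    rw [le_div_iff₀ (by positivity)] at hkd
    rw [div_le_iff₀ (by positivity)] at hdk
    constructor <;> linarith
  choose i hi using hcoord
  exact mem_iUnion.2 ⟨i, mem_closedBall.2 <| (dist_pi_le_iff hr.le).2 fun j => hi j⟩

theorem volume_mul_cubeAvg (q : ℝ) (f : (ι → ℝ) → ℂ) (x : ι → ℝ) {r : ℝ} (hr : 0 < r) :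
    volume (closedBall x r) * cubeAvg q f x r =
      ∫⁻ y in closedBall x r, (‖f y‖₊ : ℝ≥0∞) ^ q :=
  ENNReal.mul_inv_cancel_left (measure_closedBall_pos volume x hr).ne'
    measure_closedBall_lt_top.ne

theorem ofReal_div_pow_mul_cubeAvg_le (q : ℝ) (f : (ι → ℝ) → ℂ) (x : ι → ℝ) {r t : ℝ}
    (hr : 0 < r) (hrt : r ≤ t) :
    ENNReal.ofReal ((r / t) ^ Fintype.card ι) * cubeAvg q f x r ≤ cubeAvg q f x t := by
  have ht : 0 < t := hr.trans_le hrt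
  have hvol : ENNReal.ofReal ((r / t) ^ Fintype.card ι) * (volume (closedBall x r))⁻¹ =
      (volume (closedBall x t))⁻¹ := by
    rw [Real.volume_pi_closedBall x hr.le, Real.volume_pi_closedBall x ht.le,
      ← ENNReal.ofReal_inv_of_pos (by positivity), ← ENNReal.ofReal_inv_of_pos (by positivity),
      ← ENNReal.ofReal_mul (by positivity)]
    congr 1
    rw [div_pow, mul_pow, mul_pow]
    field_simp
  rw [cubeAvg, ← mul_assoc, hvol, cubeAvg]
  gcongr

theorem ceil_div_pow_mul_volume_closedBall_le (x : ι → ℝ) {r s : ℝ} (hr : 0 < r) (hrs : r ≤ s) :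
    (⌈s / r⌉₊ : ℝ≥0∞) ^ Fintype.card ι * volume (closedBall x r) ≤
      2 ^ Fintype.card ι * volume (closedBall x s) := by
  have hs : 0 < s := hr.trans_le hrs
  have hceil : (⌈s / r⌉₊ : ℝ) * r ≤ 2 * s := by
    have := Nat.ceil_lt_add_one (div_nonneg hs.le hr.le)
    have := (one_le_div hr).2 hrs
    calc (⌈s / r⌉₊ : ℝ) * r ≤ (2 * (s / r)) * r := by gcongr; linarith
      _ = 2 * s := by field_simp
  rw [Real.volume_pi_closedBall x hr.le, Real.volume_pi_closedBall x hs.le,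
    ← ENNReal.ofReal_natCast, ← ENNReal.ofReal_ofNat, ← ENNReal.ofReal_pow (by positivity),
    ← ENNReal.ofReal_pow (by positivity), ← ENNReal.ofReal_mul (by positivity),
    ← ENNReal.ofReal_mul (by positivity), ← mul_pow, ← mul_pow]
  exact ENNReal.ofReal_le_ofReal (pow_le_pow_left₀ (by positivity) (by linarith) _)

theorem lintegral_closedBall_le_ceil_div_pow_mul_iSup (q : ℝ) (f : (ι → ℝ) → ℂ) (x : ι → ℝ)
    {r s : ℝ} (hr : 0 < r) (hrs : r ≤ s) :
    ∫⁻ y in closedBall x s, (‖f y‖₊ : ℝ≥0∞) ^ q ≤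
      (⌈s / r⌉₊ : ℝ≥0∞) ^ Fintype.card ι * volume (closedBall x r) * ⨆ y, cubeAvg q f y r := by
  classical
  calc ∫⁻ y in closedBall x s, (‖f y‖₊ : ℝ≥0∞) ^ q
      ≤ ∑' i : ι → Fin ⌈s / r⌉₊, ∫⁻ y in closedBall (fun j => x j - s + (2 * i j + 1) * r) r,
          (‖f y‖₊ : ℝ≥0∞) ^ q :=
        (lintegral_mono_set (closedBall_subset_iUnion_closedBall x hr hrs)).trans
          (lintegral_iUnion_le _ _)
    _ ≤ ∑' _ : ι → Fin ⌈s / r⌉₊, volume (closedBall x r) * ⨆ y, cubeAvg q f y r := by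
        refine ENNReal.tsum_le_tsum fun i => ?_
        rw [← volume_mul_cubeAvg q f _ hr, Real.volume_pi_closedBall _ hr.le,
          Real.volume_pi_closedBall x hr.le]
        gcongr
        exact le_iSup (fun y => cubeAvg q f y r) _
    _ = (⌈s / r⌉₊ : ℝ≥0∞) ^ Fintype.card ι * volume (closedBall x r) *
          ⨆ y, cubeAvg q f y r := by
        rw [tsum_fintype, Finset.sum_const, Finset.card_univ, Fintype.card_fun,
          Fintype.card_fin, nsmul_eq_mul, mul_assoc]
        push_cast
        rfl

theorem cubeAvg_le_two_pow_mul_iSup (q : ℝ) (f : (ι → ℝ) → ℂ) (x : ι → ℝ) {r s : ℝ}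
    (hr : 0 < r) (hrs : r ≤ s) :
    cubeAvg q f x s ≤ 2 ^ Fintype.card ι * ⨆ y, cubeAvg q f y r := by
  have hs : 0 < s := hr.trans_le hrs
  calc cubeAvg q f x s
      ≤ (volume (closedBall x s))⁻¹ * ((⌈s / r⌉₊ : ℝ≥0∞) ^ Fintype.card ι *
          volume (closedBall x r) * ⨆ y, cubeAvg q f y r) := by
        rw [cubeAvg]
        gcongr
        exact lintegral_closedBall_le_ceil_div_pow_mul_iSup q f x hr hrs
    _ ≤ (volume (closedBall x s))⁻¹ *
          (2 ^ Fintype.card ι * volume (closedBall x s) * ⨆ y, cubeAvg q f y r) := by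
        gcongr _ * (?_ * _)
        exact ceil_div_pow_mul_volume_closedBall_le x hr hrs
    _ = 2 ^ Fintype.card ι * ⨆ y, cubeAvg q f y r := by
        rw [mul_comm (2 ^ _), mul_assoc, ENNReal.inv_mul_cancel_left
          (measure_closedBall_pos volume x hs).ne' measure_closedBall_lt_top.ne]

end Cubes

section Morrey

variable {n : ℕ} {q : ℝ} {φ : ℝ → ℝ} {f : (Fin n → ℝ) → ℂ}

theorem ofReal_mul_cubeAvg_rpow_le_morreyNorm (x : Fin n → ℝ) {r : ℝ} (hr : 0 < r) :
    ENNReal.ofReal (φ r) * cubeAvg q f x r ^ (1 / q) ≤ morreyNorm n q φ f :=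
  le_iSup_of_le x (le_iSup₂_of_le r hr le_rfl)

theorem ofReal_mul_iSup_cubeAvg_rpow_le_morreyNorm (hq : 0 < q) {r : ℝ} (hr : 0 < r) :
    ENNReal.ofReal (φ r) * (⨆ x, cubeAvg q f x r) ^ (1 / q) ≤ morreyNorm n q φ f := by
  rw [← ENNReal.orderIsoRpow_apply (1 / q) (by positivity), OrderIso.map_iSup, ENNReal.mul_iSup]
  exact iSup_le fun x => ofReal_mul_cubeAvg_rpow_le_morreyNorm x hr

theorem morreyNorm_mono {ψ : ℝ → ℝ} (h : ∀ r, 0 < r → φ r ≤ ψ r) :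
    morreyNorm n q φ f ≤ morreyNorm n q ψ f :=
  iSup_mono fun _ => iSup₂_mono fun r hr => by gcongr; exact h r hr

theorem ofReal_mul_cubeAvg_rpow_le_of_le (hq : 0 < q) (x : Fin n → ℝ) {r t : ℝ} (ht : 0 < t)
    (htr : t ≤ r) :
    ENNReal.ofReal (φ t) * cubeAvg q f x r ^ (1 / q) ≤ 2 ^ ((n : ℝ) / q) * morreyNorm n q φ f :=
  calc ENNReal.ofReal (φ t) * cubeAvg q f x r ^ (1 / q)
      ≤ ENNReal.ofReal (φ t) * (2 ^ n * ⨆ y, cubeAvg q f y t) ^ (1 / q) := by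
        have := cubeAvg_le_two_pow_mul_iSup q f x ht htr
        rw [Fintype.card_fin] at this
        gcongr
    _ = 2 ^ ((n : ℝ) / q) * (ENNReal.ofReal (φ t) * (⨆ y, cubeAvg q f y t) ^ (1 / q)) := by
        rw [ENNReal.mul_rpow_of_nonneg _ _ (by positivity), ← ENNReal.rpow_natCast,
          ← ENNReal.rpow_mul, mul_one_div]
        ring
    _ ≤ 2 ^ ((n : ℝ) / q) * morreyNorm n q φ f := by
        gcongr
        exact ofReal_mul_iSup_cubeAvg_rpow_le_morreyNorm hq ht

theorem ofReal_mul_cubeAvg_rpow_le_of_ge (hq : 0 < q) (x : Fin n → ℝ) {r t : ℝ} (hr : 0 < r)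
    (hrt : r ≤ t) :
    ENNReal.ofReal (φ t * (r / t) ^ ((n : ℝ) / q)) * cubeAvg q f x r ^ (1 / q) ≤
      morreyNorm n q φ f := by
  have ht : 0 < t := hr.trans_le hrt
  have hscale : ENNReal.ofReal ((r / t) ^ ((n : ℝ) / q)) * cubeAvg q f x r ^ (1 / q) ≤
      cubeAvg q f x t ^ (1 / q) := by
    have := ofReal_div_pow_mul_cubeAvg_le q f x hr hrt
    rw [Fintype.card_fin] at this
    calc ENNReal.ofReal ((r / t) ^ ((n : ℝ) / q)) * cubeAvg q f x r ^ (1 / q)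
        = (ENNReal.ofReal ((r / t) ^ n) * cubeAvg q f x r) ^ (1 / q) := by
          rw [ENNReal.mul_rpow_of_nonneg _ _ (by positivity),
            ENNReal.ofReal_rpow_of_nonneg (by positivity) (by positivity), ← Real.rpow_natCast,
            ← Real.rpow_mul (by positivity), mul_one_div]
      _ ≤ cubeAvg q f x t ^ (1 / q) := by gcongr
  rw [ENNReal.ofReal_mul' (by positivity), mul_assoc]
  exact (mul_le_mul_right hscale _).trans (ofReal_mul_cubeAvg_rpow_le_morreyNorm x ht)

end Morrey

noncomputable def gqEnvelope (κ : ℝ) (φ : ℝ → ℝ) (r : ℝ) : ℝ≥0∞ :=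
  ⨆ (t : ℝ) (_ : 0 < t), ENNReal.ofReal (φ t * min 1 ((r / t) ^ κ))

theorem min_one_div_rpow_le {κ r t : ℝ} (hr : 0 ≤ r) (ht : 0 < t) :
    min 1 ((r / t) ^ κ) ≤ max 1 (r ^ κ) * min (t ^ (-κ)) 1 := by
  rw [mul_min_of_nonneg _ _ (by positivity), mul_one]
  refine le_min ((min_le_right _ _).trans ?_) ((min_le_left _ _).trans (le_max_left _ _))
  rw [Real.div_rpow hr ht.le, Real.rpow_neg ht.le, div_eq_mul_inv]
  gcongr
  exact le_max_right _ _

section Envelope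

variable {κ : ℝ} {φ : ℝ → ℝ}

theorem ofReal_le_gqEnvelope {r : ℝ} (hr : 0 < r) : ENNReal.ofReal (φ r) ≤ gqEnvelope κ φ r :=
  le_iSup₂_of_le r hr (by rw [div_self hr.ne', Real.one_rpow, min_self, mul_one])

theorem gqEnvelope_pos {t₀ r : ℝ} (ht₀ : 0 < t₀) (hφt₀ : 0 < φ t₀) (hr : 0 < r) :
    0 < gqEnvelope κ φ r :=
  lt_of_lt_of_le (ENNReal.ofReal_pos.2 (by positivity)) (le_iSup₂ (f := fun t (_ : 0 < t) =>
    ENNReal.ofReal (φ t * min 1 ((r / t) ^ κ))) t₀ ht₀)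

theorem gqEnvelope_lt_top (hφ0 : ∀ t, 0 < t → 0 ≤ φ t) {C : ℝ}
    (hC : ∀ t, 0 < t → φ t * min (t ^ (-κ)) 1 ≤ C) {r : ℝ} (hr : 0 ≤ r) :
    gqEnvelope κ φ r < ⊤ := by
  refine lt_of_le_of_lt (b := ENNReal.ofReal (C * max 1 (r ^ κ)))
    (iSup₂_le fun t ht => ENNReal.ofReal_le_ofReal ?_) ENNReal.ofReal_lt_top
  calc φ t * min 1 ((r / t) ^ κ) ≤ φ t * (max 1 (r ^ κ) * min (t ^ (-κ)) 1) := by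
        gcongr
        · exact hφ0 t ht
        · exact min_one_div_rpow_le hr ht
    _ = φ t * min (t ^ (-κ)) 1 * max 1 (r ^ κ) := by ring
    _ ≤ C * max 1 (r ^ κ) := by gcongr; exact hC t ht

theorem gqEnvelope_mono (hκ : 0 ≤ κ) (hφ0 : ∀ t, 0 < t → 0 ≤ φ t) {s t : ℝ} (hs : 0 ≤ s)
    (hst : s ≤ t) : gqEnvelope κ φ s ≤ gqEnvelope κ φ t :=
  iSup₂_mono fun u hu => by gcongr; exact hφ0 u hu

theorem ofReal_rpow_neg_mul_gqEnvelope {r : ℝ} (hr : 0 < r) :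
    ENNReal.ofReal (r ^ (-κ)) * gqEnvelope κ φ r =
      ⨆ (t : ℝ) (_ : 0 < t), ENNReal.ofReal (φ t * min (r ^ (-κ)) (t ^ (-κ))) := by
  simp only [gqEnvelope, ENNReal.mul_iSup]
  refine iSup_congr fun t => iSup_congr fun ht => ?_
  rw [← ENNReal.ofReal_mul (by positivity), mul_left_comm, mul_min_of_nonneg _ _ (by positivity),
    mul_one, Real.div_rpow hr.le ht.le, Real.rpow_neg hr.le, Real.rpow_neg ht.le]
  field_simp

theorem rpow_neg_mul_gqEnvelope_le (hκ : 0 ≤ κ) (hφ0 : ∀ t, 0 < t → 0 ≤ φ t) {s t : ℝ}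
    (hs : 0 < s) (hst : s ≤ t) :
    ENNReal.ofReal (t ^ (-κ)) * gqEnvelope κ φ t ≤
      ENNReal.ofReal (s ^ (-κ)) * gqEnvelope κ φ s := by
  rw [ofReal_rpow_neg_mul_gqEnvelope (hs.trans_le hst), ofReal_rpow_neg_mul_gqEnvelope hs]
  exact iSup₂_mono fun u hu => ENNReal.ofReal_le_ofReal <| mul_le_mul_of_nonneg_left
    (min_le_min (Real.rpow_le_rpow_of_nonpos hs hst (neg_nonpos.2 hκ)) le_rfl) (hφ0 u hu)

end Envelope

theorem isGq_toReal_gqEnvelope {n : ℕ} {q : ℝ} (hq : 0 < q) {φ : ℝ → ℝ}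
    (hφ0 : ∀ t, 0 < t → 0 ≤ φ t) {t₀ : ℝ} (ht₀ : 0 < t₀) (hφt₀ : 0 < φ t₀) {C : ℝ}
    (hC : ∀ t, 0 < t → φ t * min (t ^ (-((n : ℝ) / q))) 1 ≤ C) :
    IsGq n q fun r => (gqEnvelope (n / q) φ r).toReal := by
  have hκ : 0 ≤ (n : ℝ) / q := by positivity
  have hfin : ∀ r, 0 < r → gqEnvelope (n / q) φ r ≠ ⊤ := fun r hr =>
    (gqEnvelope_lt_top hφ0 hC hr.le).ne
  refine ⟨fun t ht => ENNReal.toReal_pos (gqEnvelope_pos ht₀ hφt₀ ht).ne' (hfin t ht),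
    fun s t hs hst => ENNReal.toReal_mono (hfin t (hs.trans_le hst))
      (gqEnvelope_mono hκ hφ0 hs.le hst), fun s t hs hst => ?_⟩
  have hrpow : ∀ r, 0 < r → r ^ (-((n : ℝ) / q)) * (gqEnvelope (n / q) φ r).toReal =
      (ENNReal.ofReal (r ^ (-((n : ℝ) / q))) * gqEnvelope (n / q) φ r).toReal := fun r hr => by
    rw [ENNReal.toReal_mul, ENNReal.toReal_ofReal (by positivity)]
  rw [hrpow t (hs.trans_le hst), hrpow s hs]
  exact ENNReal.toReal_mono (ENNReal.mul_ne_top ENNReal.ofReal_ne_top (hfin s hs))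
    (rpow_neg_mul_gqEnvelope_le hκ hφ0 hs hst)

theorem morreyNorm_le_of_le_gqEnvelope {n : ℕ} {q : ℝ} (hq : 0 < q) {φ ψ : ℝ → ℝ}
    (hψ : ∀ r, 0 < r → ENNReal.ofReal (ψ r) ≤ gqEnvelope (n / q) φ r) (f : (Fin n → ℝ) → ℂ) :
    morreyNorm n q ψ f ≤ 2 ^ ((n : ℝ) / q) * morreyNorm n q φ f := by
  refine iSup_le fun x => iSup₂_le fun r hr => ?_
  refine (mul_le_mul_left (hψ r hr) _).trans ?_
  simp only [gqEnvelope, ENNReal.iSup_mul]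
  refine iSup₂_le fun t ht => ?_
  rcases le_total t r with htr | hrt
  · calc ENNReal.ofReal (φ t * min 1 ((r / t) ^ ((n : ℝ) / q))) * cubeAvg q f x r ^ (1 / q)
        ≤ ENNReal.ofReal (φ t) * cubeAvg q f x r ^ (1 / q) := by
          rw [ENNReal.ofReal_mul' (by positivity)]
          gcongr
          exact mul_le_of_le_one_right zero_le (ENNReal.ofReal_le_one.2 (min_le_left _ _))
      _ ≤ 2 ^ ((n : ℝ) / q) * morreyNorm n q φ f :=
          ofReal_mul_cubeAvg_rpow_le_of_le hq x ht htr
  · rw [min_eq_right (Real.rpow_le_one (by positivity) ((div_le_one ht).2 hrt) (by positivity))]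
    refine (ofReal_mul_cubeAvg_rpow_le_of_ge hq x hr hrt).trans (le_mul_of_one_le_left zero_le ?_)
    exact ENNReal.one_rpow ((n : ℝ) / q) ▸ ENNReal.rpow_le_rpow one_le_two (by positivity)

/-- Nakai: if `0 < sup_{t>0} φ(t) min(t^{-n/q},1) < ∞`, then there
exists `φ* ∈ G_q` whose generalized Morrey norm is equivalent to that of `φ`. -/
theorem exists_Gq_equivalent (n : ℕ) (q : ℝ) (hq : 0 < q)
    (φ : ℝ → ℝ) (hφ0 : ∀ t, 0 < t → 0 ≤ φ t)
    (hpos : ∃ t₀, 0 < t₀ ∧ 0 < φ t₀)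
    (hbdd : ∃ C : ℝ, ∀ t, 0 < t → φ t * min (t ^ (-((n : ℝ) / q))) 1 ≤ C) :
    ∃ (ψ : ℝ → ℝ) (C : ℝ), IsGq n q ψ ∧ 1 ≤ C ∧
      ∀ f : (Fin n → ℝ) → ℂ,
        morreyNorm n q ψ f ≤ ENNReal.ofReal C * morreyNorm n q φ f ∧
        morreyNorm n q φ f ≤ ENNReal.ofReal C * morreyNorm n q ψ f := by
  obtain ⟨t₀, ht₀, hφt₀⟩ := hpos
  obtain ⟨C₀, hC₀⟩ := hbdd
  have hC : 1 ≤ (2 : ℝ) ^ ((n : ℝ) / q) := Real.one_le_rpow one_le_two (by positivity)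
  refine ⟨fun r => (gqEnvelope (n / q) φ r).toReal, 2 ^ ((n : ℝ) / q),
    isGq_toReal_gqEnvelope hq hφ0 ht₀ hφt₀ hC₀, hC, fun f => ⟨?_, ?_⟩⟩
  · rw [← ENNReal.ofReal_rpow_of_pos two_pos, ENNReal.ofReal_ofNat]
    exact morreyNorm_le_of_le_gqEnvelope hq (fun r _ => ENNReal.ofReal_toReal_le) f
  · calc morreyNorm n q φ f ≤ morreyNorm n q (fun r => (gqEnvelope (n / q) φ r).toReal) f :=
          morreyNorm_mono fun r hr => (ENNReal.ofReal_le_iff_le_toReal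
            (gqEnvelope_lt_top hφ0 hC₀ hr.le).ne).1 (ofReal_le_gqEnvelope hr)
      _ ≤ _ := le_mul_of_one_le_left zero_le (ENNReal.one_le_ofReal.2 hC)
end

section
/- Let 0<q<∞ and φ ∈ G_q. Then for every x ∈ ℝⁿ and R>0, the indicator function of the cube Q(x,R) satisfies ‖χ_{Q(x,R)}‖_{M^φ_q} = φ(R). -/
open MeasureTheory Set
open scoped ENNReal NNReal

lemma aux_integral (n : ℕ) (q : ℝ) (hq : 0 < q) (x z : Fin n → ℝ) (R r : ℝ) :
    (∫⁻ y in Metric.closedBall z r,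
        (‖(Set.indicator (Metric.closedBall x R) (fun _ => (1 : ℂ))) y‖₊ : ℝ≥0∞) ^ q)
      = volume (Metric.closedBall x R ∩ Metric.closedBall z r) := by
  have h1 : ∀ y : Fin n → ℝ,
      ((‖(Set.indicator (Metric.closedBall x R) (fun _ => (1 : ℂ))) y‖₊ : ℝ≥0∞) ^ q)
        = Set.indicator (Metric.closedBall x R) (fun _ => (1 : ℝ≥0∞)) y := by
    intro y
    by_cases hy : y ∈ Metric.closedBall x R
    · simp [Set.indicator_of_mem hy]
    · simp [Set.indicator_of_notMem hy, ENNReal.zero_rpow_of_pos hq]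
  simp only [h1]
  rw [lintegral_indicator measurableSet_closedBall,
    Measure.restrict_restrict measurableSet_closedBall]
  simp

/-- for `φ ∈ G_q`, the indicator of the cube `Q(x,R)` satisfies
`‖χ_{Q(x,R)}‖_{M^φ_q} = φ(R)`. -/
theorem morreyNorm_indicator_cube (n : ℕ) (q : ℝ) (hq : 0 < q)
    (φ : ℝ → ℝ) (hφ : IsGq n q φ) (x : Fin n → ℝ) (R : ℝ) (hR : 0 < R) :
    morreyNorm n q φ (Set.indicator (Metric.closedBall x R) (fun _ => (1 : ℂ))) =
      ENNReal.ofReal (φ R) := by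
  obtain ⟨hpos, hmono, hanti⟩ := hφ
  have hq' : (0:ℝ) ≤ 1 / q := by positivity
  have hvolx : volume (Metric.closedBall x R) = ENNReal.ofReal ((2*R)^n) := by
    simpa using Real.volume_pi_closedBall x hR.le
  rw [morreyNorm]
  apply le_antisymm
  · refine iSup_le fun z => iSup_le fun r => iSup_le fun hr => ?_
    rw [aux_integral n q hq x z R r]
    have hvolz : volume (Metric.closedBall z r) = ENNReal.ofReal ((2*r)^n) := by
      simpa using Real.volume_pi_closedBall z hr.le
    rcases le_total r R with hrR | hRr
    · -- case r ≤ R : ratio ≤ 1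
      have h1 : (volume (Metric.closedBall z r))⁻¹ *
          volume (Metric.closedBall x R ∩ Metric.closedBall z r) ≤ 1 := by
        rw [← ENNReal.inv_mul_cancel (a := volume (Metric.closedBall z r))
          (by rw [hvolz]; exact (ENNReal.ofReal_pos.mpr (by positivity)).ne')
          (by rw [hvolz]; exact ENNReal.ofReal_ne_top)]
        exact mul_le_mul_right (measure_mono inter_subset_right) _
      calc ENNReal.ofReal (φ r) * ((volume (Metric.closedBall z r))⁻¹ *
              volume (Metric.closedBall x R ∩ Metric.closedBall z r)) ^ (1/q)
          ≤ ENNReal.ofReal (φ r) * (1:ℝ≥0∞) ^ (1/q) :=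
            mul_le_mul_right (ENNReal.rpow_le_rpow h1 hq') _
        _ = ENNReal.ofReal (φ r) := by simp
        _ ≤ ENNReal.ofReal (φ R) := ENNReal.ofReal_le_ofReal (hmono r R hr hrR)
    · -- case R ≤ r
      set e : ℝ := (n : ℝ) / q with he
      have hrpos : (0:ℝ) < r := lt_of_lt_of_le hR hRr
      have hre : (0:ℝ) < r ^ e := Real.rpow_pos_of_pos hrpos e
      have hRe : (0:ℝ) < R ^ e := Real.rpow_pos_of_pos hR e
      have key : φ r * (R / r) ^ e ≤ φ R := by
        have h := hanti R r hR hRr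
        rw [Real.rpow_neg hR.le, Real.rpow_neg hrpos.le] at h
        have h2 : R ^ e * ((r ^ e)⁻¹ * φ r) ≤ R ^ e * ((R ^ e)⁻¹ * φ R) :=
          mul_le_mul_of_nonneg_left h hRe.le
        calc φ r * (R / r) ^ e = R ^ e * ((r ^ e)⁻¹ * φ r) := by
              rw [Real.div_rpow hR.le hrpos.le]; field_simp
          _ ≤ R ^ e * ((R ^ e)⁻¹ * φ R) := h2
          _ = φ R := by field_simp
      have hstep : (volume (Metric.closedBall z r))⁻¹ *
          volume (Metric.closedBall x R ∩ Metric.closedBall z r)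
            ≤ ENNReal.ofReal (((2*r)^n)⁻¹ * (2*R)^n) := by
        rw [hvolz, ENNReal.ofReal_mul (by positivity),
          ENNReal.ofReal_inv_of_pos (by positivity)]
        exact mul_le_mul_right (le_trans (measure_mono inter_subset_left) hvolx.le) _
      have hc : ((2*r)^n)⁻¹ * (2*R)^n = (R / r) ^ (n:ℕ) := by
        rw [div_pow]; field_simp; ring
      have hcrpow : (((2*r)^n)⁻¹ * (2*R)^n) ^ (1/q) = (R / r) ^ e := by
        rw [hc, ← Real.rpow_natCast (R/r) n,
          ← Real.rpow_mul (div_nonneg hR.le hrpos.le), mul_one_div]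
      calc ENNReal.ofReal (φ r) * ((volume (Metric.closedBall z r))⁻¹ *
              volume (Metric.closedBall x R ∩ Metric.closedBall z r)) ^ (1/q)
          ≤ ENNReal.ofReal (φ r) * (ENNReal.ofReal (((2*r)^n)⁻¹ * (2*R)^n)) ^ (1/q) :=
            mul_le_mul_right (ENNReal.rpow_le_rpow hstep hq') _
        _ = ENNReal.ofReal (φ r) * ENNReal.ofReal ((R / r) ^ e) := by
            rw [ENNReal.ofReal_rpow_of_nonneg (by positivity) hq', hcrpow]
        _ = ENNReal.ofReal (φ r * (R / r) ^ e) := by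
            rw [ENNReal.ofReal_mul (le_of_lt (hpos r hr))]
        _ ≤ ENNReal.ofReal (φ R) := ENNReal.ofReal_le_ofReal key
  · have hterm : ENNReal.ofReal (φ R) *
        ((volume (Metric.closedBall x R))⁻¹ *
          ∫⁻ y in Metric.closedBall x R,
            (‖(Set.indicator (Metric.closedBall x R) (fun _ => (1 : ℂ))) y‖₊ : ℝ≥0∞) ^ q)
          ^ (1/q) = ENNReal.ofReal (φ R) := by
      rw [aux_integral n q hq x x R R, inter_self,
        ENNReal.inv_mul_cancel
          (by rw [hvolx]; exact (ENNReal.ofReal_pos.mpr (by positivity)).ne')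
          (by rw [hvolx]; exact ENNReal.ofReal_ne_top),
        ENNReal.one_rpow, mul_one]
    exact hterm.symm.le.trans (le_iSup_of_le x (le_iSup_of_le R (le_iSup_of_le hR le_rfl)))
end

section
/- Let 1<q<∞ and φ ∈ G_q. Then there exists a constant C>0, depending only on n and q, such that for every measurable f:ℝⁿ→ℂ, ‖Mf‖_{M^φ_q} ≤ C‖f‖_{M^φ_q}, where M is the uncentered Hardy–Littlewood maximal operator over Euclidean balls. -/
open MeasureTheory Set
open scoped ENNReal NNReal

/-- The generalized Morrey norm of an `ℝ≥0∞`-valued function. -/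
noncomputable def morreyNormE (n : ℕ) (q : ℝ) (φ : ℝ → ℝ)
    (F : (Fin n → ℝ) → ℝ≥0∞) : ℝ≥0∞ :=
  ⨆ (x : Fin n → ℝ) (r : ℝ) (_ : 0 < r),
    ENNReal.ofReal (φ r) *
      ((volume (Metric.closedBall x r))⁻¹ *
        ∫⁻ y in Metric.closedBall x r, (F y) ^ q) ^ (1 / q)

/-- The (open) Euclidean ball in `Fin n → ℝ`. -/
def euclBall (n : ℕ) (c : Fin n → ℝ) (r : ℝ) : Set (Fin n → ℝ) :=
  {y | Real.sqrt (∑ j, (y j - c j) ^ 2) < r}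

/-- The uncentered Hardy--Littlewood maximal operator over Euclidean balls. -/
noncomputable def hlMaximal (n : ℕ) (f : (Fin n → ℝ) → ℂ)
    (x : Fin n → ℝ) : ℝ≥0∞ :=
  ⨆ (c : Fin n → ℝ) (r : ℝ) (_ : 0 < r) (_ : x ∈ euclBall n c r),
    (volume (euclBall n c r))⁻¹ * ∫⁻ y in euclBall n c r, (‖f y‖₊ : ℝ≥0∞)

/-!
Fix a cube `Q = Q(x₀, r)`. A Euclidean ball of radius `ρ ≤ r` through a point of `Q` lies in
`3Q`, so on such balls `f` may be replaced by `f·1_{3Q}`. The strong `(q, q)` inequality for the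
maximal operator (Vitali covering, weak `(1, 1)` bound, Marcinkiewicz interpolation through the
layer-cake formula) bounds the `L^q` mean of `M(f·1_{3Q})` over `Q` by `3^{n/q}` times the `L^q`
mean of `f` over `3Q`, hence by a multiple of `φ(3r)⁻¹ ‖f‖ ≤ φ(r)⁻¹ ‖f‖`. A ball of radius
`ρ > r` lies in the cube `Q(c, ρ)` of comparable measure, so by Hölder its average is at most a
constant times `φ(ρ)⁻¹ ‖f‖ ≤ φ(r)⁻¹ ‖f‖`. By Minkowski, `φ(r)` times the `L^q` mean of `Mf` over
`Q` is then at most a constant times `‖f‖`.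
-/

open Metric

lemma lintegral_Ioi_rpow_eq_top (p : ℝ) :
    ∫⁻ t in Ioi (0 : ℝ), ENNReal.ofReal (t ^ p) = ∞ := by
  by_contra h
  refine not_integrableOn_Ioi_rpow p ((lintegral_ofReal_ne_top_iff_integrable ?_ ?_).1 h)
  · exact (measurable_id.pow_const p).aestronglyMeasurable
  · exact (ae_restrict_iff' measurableSet_Ioi).2
      (.of_forall fun t ht => Real.rpow_nonneg (le_of_lt ht) p)

lemma lintegral_Ioi_indicator_rpow {p : ℝ} (hp : -1 < p) (a : ℝ≥0∞) :
    ∫⁻ t in Ioi (0 : ℝ),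
        {t | ENNReal.ofReal t < a}.indicator (fun t => ENNReal.ofReal (t ^ p)) t =
      a ^ (p + 1) / ENNReal.ofReal (p + 1) := by
  have hp1 : 0 < p + 1 := by linarith
  rcases eq_or_ne a ∞ with rfl | ha
  · simp only [ENNReal.ofReal_lt_top, ofPred_true, indicator_univ, lintegral_Ioi_rpow_eq_top,
      ENNReal.top_rpow_of_pos hp1, ENNReal.top_div_of_ne_top ENNReal.ofReal_ne_top]
  have hset : {t : ℝ | ENNReal.ofReal t < a} ∩ Ioi 0 = Ioo 0 a.toReal := by
    ext t
    simp only [mem_inter_iff, mem_ofPred_eq, mem_Ioi, mem_Ioo]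
    constructor
    · rintro ⟨h, ht⟩
      exact ⟨ht, (ENNReal.ofReal_lt_iff_lt_toReal ht.le ha).1 h⟩
    · rintro ⟨ht, h⟩
      exact ⟨(ENNReal.ofReal_lt_iff_lt_toReal ht.le ha).2 h, ht⟩
  have hmeas : MeasurableSet {t : ℝ | ENNReal.ofReal t < a} :=
    measurableSet_lt ENNReal.measurable_ofReal measurable_const
  have hint : IntegrableOn (fun t : ℝ => t ^ p) (Ioo 0 a.toReal) :=
    (intervalIntegral.intervalIntegrable_rpow' hp).1.mono_set Ioo_subset_Ioc_self
  rw [lintegral_indicator hmeas, Measure.restrict_restrict hmeas, hset,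
    ← ofReal_integral_eq_lintegral_ofReal hint ((ae_restrict_iff' measurableSet_Ioo).2
      (.of_forall fun t ht => Real.rpow_nonneg ht.1.le p)),
    ← integral_Ioc_eq_integral_Ioo, ← intervalIntegral.integral_of_le ENNReal.toReal_nonneg,
    integral_rpow (.inl hp), Real.zero_rpow hp1.ne', sub_zero, ENNReal.ofReal_div_of_pos hp1,
    ← ENNReal.ofReal_rpow_of_nonneg ENNReal.toReal_nonneg hp1.le, ENNReal.ofReal_toReal ha]

lemma ENNReal.lintegral_rpow_eq_lintegral_meas_lt_mul {α : Type*} [MeasurableSpace α]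
    {μ : Measure α} [SFinite μ] {F : α → ℝ≥0∞} (hF : Measurable F) {p : ℝ} (hp : 0 < p) :
    ∫⁻ x, F x ^ p ∂μ = ENNReal.ofReal p *
      ∫⁻ t in Ioi (0 : ℝ), μ {x | ENNReal.ofReal t < F x} * ENNReal.ofReal (t ^ (p - 1)) := by
  have hS : MeasurableSet {z : α × ℝ | ENNReal.ofReal z.2 < F z.1} :=
    measurableSet_lt (ENNReal.measurable_ofReal.comp measurable_snd) (hF.comp measurable_fst)
  calc ∫⁻ x, F x ^ p ∂μ
      = ∫⁻ x, ENNReal.ofReal p * (∫⁻ t in Ioi (0 : ℝ),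
          {t | ENNReal.ofReal t < F x}.indicator (fun t => ENNReal.ofReal (t ^ (p - 1))) t) ∂μ := by
        refine lintegral_congr fun x => ?_
        rw [lintegral_Ioi_indicator_rpow (by linarith), sub_add_cancel,
          ENNReal.mul_div_cancel (by simpa using hp) ENNReal.ofReal_ne_top]
    _ = ENNReal.ofReal p * ∫⁻ t in Ioi (0 : ℝ), ∫⁻ x,
          {x | ENNReal.ofReal t < F x}.indicator (fun _ => ENNReal.ofReal (t ^ (p - 1))) x ∂μ := by
        rw [lintegral_const_mul' _ _ ENNReal.ofReal_ne_top, lintegral_lintegral_swap]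
        · rfl
        · exact (Measurable.indicator (f := fun z : α × ℝ => ENNReal.ofReal (z.2 ^ (p - 1)))
            (by fun_prop) hS).aemeasurable
    _ = _ := by
        congr 1
        refine lintegral_congr fun t => ?_
        rw [lintegral_indicator_const (measurableSet_lt measurable_const hF), mul_comm]

lemma ENNReal.mul_rpow_sub_one_self (x : ℝ≥0∞) {p : ℝ} (hp : 1 ≤ p) :
    x * x ^ (p - 1) = x ^ p := by
  conv_lhs => enter [1]; rw [← ENNReal.rpow_one x]
  rw [← ENNReal.rpow_add_of_nonneg _ _ zero_le_one (by linarith), add_sub_cancel]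

lemma lintegral_Ioi_indicator_mul_rpow_sub_two (b : ℝ≥0∞) {q : ℝ} (hq : 1 < q) :
    ∫⁻ t in Ioi (0 : ℝ),
        {t | ENNReal.ofReal t < 2 * b}.indicator (fun _ => b) t * ENNReal.ofReal (t ^ (q - 2)) =
      2 ^ (q - 1) / ENNReal.ofReal (q - 1) * b ^ q := by
  calc ∫⁻ t in Ioi (0 : ℝ),
        {t | ENNReal.ofReal t < 2 * b}.indicator (fun _ => b) t * ENNReal.ofReal (t ^ (q - 2))
      = b * ∫⁻ t in Ioi (0 : ℝ),
          {t | ENNReal.ofReal t < 2 * b}.indicator (fun t => ENNReal.ofReal (t ^ (q - 2))) t := by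
        rw [← lintegral_const_mul _ (Measurable.indicator (by fun_prop)
          (measurableSet_lt ENNReal.measurable_ofReal measurable_const))]
        refine lintegral_congr fun t => ?_
        simp only [indicator_apply, mem_ofPred_eq]
        split_ifs <;> simp
    _ = 2 ^ (q - 1) / ENNReal.ofReal (q - 1) * b ^ q := by
        rw [lintegral_Ioi_indicator_rpow (by linarith), show q - 2 + 1 = q - 1 by ring,
          ENNReal.mul_rpow_of_nonneg _ _ (by linarith), ← ENNReal.mul_rpow_sub_one_self _ hq.le]
        simp only [div_eq_mul_inv]
        ring

-- Marcinkiewicz interpolation: the hypothesis is a weak `(1, 1)` bound for the part of `g` above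
-- level `t / 2`.
theorem lintegral_rpow_le_of_mul_meas_lt_le {α β : Type*} [MeasurableSpace α]
    [MeasurableSpace β] {μ : Measure α} {ν : Measure β} [SFinite μ] [SFinite ν]
    {F : α → ℝ≥0∞} {g : β → ℝ≥0∞} (hF : Measurable F) (hg : Measurable g) {K : ℝ≥0∞} {q : ℝ}
    (hq : 1 < q)
    (h : ∀ t : ℝ, 0 < t → ENNReal.ofReal t * μ {x | ENNReal.ofReal t < F x} ≤
      K * ∫⁻ y in {y | ENNReal.ofReal t < 2 * g y}, g y ∂ν) :
    ∫⁻ x, F x ^ q ∂μ ≤ 2 ^ (q - 1) * ENNReal.ofReal (q / (q - 1)) * K * ∫⁻ y, g y ^ q ∂ν := by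
  set S : ℝ → Set β := fun t => {y | ENNReal.ofReal t < 2 * g y}
  have hmeas : Measurable fun z : ℝ × β =>
      (S z.1).indicator g z.2 * ENNReal.ofReal (z.1 ^ (q - 2)) :=
    (Measurable.indicator (f := fun z : ℝ × β => g z.2) (hg.comp measurable_snd)
      (measurableSet_lt (ENNReal.measurable_ofReal.comp measurable_fst)
        ((hg.comp measurable_snd).const_mul 2))).mul (by fun_prop)
  have hsplit : ∀ t : ℝ, 0 < t →
      ENNReal.ofReal (t ^ (q - 1)) = ENNReal.ofReal t * ENNReal.ofReal (t ^ (q - 2)) := by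
    intro t ht
    rw [← ENNReal.ofReal_mul ht.le, show q - 1 = 1 + (q - 2) by ring, Real.rpow_add ht,
      Real.rpow_one]
  have hinner : ∀ y, ∫⁻ t in Ioi (0 : ℝ), (S t).indicator g y * ENNReal.ofReal (t ^ (q - 2)) =
      2 ^ (q - 1) / ENNReal.ofReal (q - 1) * g y ^ q :=
    fun y => lintegral_Ioi_indicator_mul_rpow_sub_two (g y) hq
  calc ∫⁻ x, F x ^ q ∂μ
      = ENNReal.ofReal q * ∫⁻ t in Ioi (0 : ℝ),
          ENNReal.ofReal t * μ {x | ENNReal.ofReal t < F x} * ENNReal.ofReal (t ^ (q - 2)) := by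
        rw [ENNReal.lintegral_rpow_eq_lintegral_meas_lt_mul hF (by linarith)]
        congr 1
        refine setLIntegral_congr_fun measurableSet_Ioi fun t ht => ?_
        rw [hsplit t ht]
        ring
    _ ≤ ENNReal.ofReal q * ∫⁻ t in Ioi (0 : ℝ),
          K * ∫⁻ y, (S t).indicator g y * ENNReal.ofReal (t ^ (q - 2)) ∂ν := by
        refine mul_le_mul_right (setLIntegral_mono' measurableSet_Ioi fun t ht => ?_) _
        rw [lintegral_mul_const' _ _ ENNReal.ofReal_ne_top, ← mul_assoc,
          lintegral_indicator (measurableSet_lt measurable_const (hg.const_mul 2))]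
        exact mul_le_mul_left (h t ht) _
    _ = ENNReal.ofReal q * K * ∫⁻ y, (∫⁻ t in Ioi (0 : ℝ),
          (S t).indicator g y * ENNReal.ofReal (t ^ (q - 2))) ∂ν := by
        rw [lintegral_const_mul'' _ hmeas.lintegral_prod_right'.aemeasurable, mul_assoc,
          lintegral_lintegral_swap hmeas.aemeasurable]
    _ = 2 ^ (q - 1) * ENNReal.ofReal (q / (q - 1)) * K * ∫⁻ y, g y ^ q ∂ν := by
        simp_rw [hinner]
        rw [lintegral_const_mul _ (hg.pow_const q), ENNReal.ofReal_div_of_pos (by linarith)]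
        simp only [div_eq_mul_inv]
        ring

section BallMaximal

variable {α : Type*} [PseudoMetricSpace α] [MeasurableSpace α]

noncomputable def ballMaximal (μ : Measure α) (g : α → ℝ≥0∞) (x : α) : ℝ≥0∞ :=
  ⨆ (c : α) (r : ℝ) (_ : x ∈ ball c r), ⨍⁻ y in ball c r, g y ∂μ

variable {μ : Measure α} {g : α → ℝ≥0∞}

lemma setLAverage_le_ballMaximal {x c : α} {r : ℝ} (hx : x ∈ ball c r) :
    ⨍⁻ y in ball c r, g y ∂μ ≤ ballMaximal μ g x :=
  le_iSup₂_of_le c r <| le_iSup_of_le hx le_rfl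

lemma ballMaximal_le_iff {x : α} {L : ℝ≥0∞} :
    ballMaximal μ g x ≤ L ↔ ∀ c r, x ∈ ball c r → ⨍⁻ y in ball c r, g y ∂μ ≤ L := by
  simp only [ballMaximal, iSup_le_iff]

lemma lt_ballMaximal_iff {x : α} {L : ℝ≥0∞} :
    L < ballMaximal μ g x ↔ ∃ c r, x ∈ ball c r ∧ L < ⨍⁻ y in ball c r, g y ∂μ := by
  simp only [ballMaximal, lt_iSup_iff, exists_prop]

lemma isOpen_setOf_lt_ballMaximal (L : ℝ≥0∞) : IsOpen {x | L < ballMaximal μ g x} := by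
  refine isOpen_iff_forall_mem_open.2 fun x hx => ?_
  obtain ⟨c, r, hxB, hL⟩ := lt_ballMaximal_iff.1 hx
  exact ⟨ball c r, fun y hy => lt_ballMaximal_iff.2 ⟨c, r, hy, hL⟩, isOpen_ball, hxB⟩

lemma measurable_ballMaximal [OpensMeasurableSpace α] : Measurable (ballMaximal μ g) :=
  measurable_of_Ioi fun L => (isOpen_setOf_lt_ballMaximal L).measurableSet

lemma ballMaximal_le_add {h : α → ℝ≥0∞} {a : ℝ≥0∞} (hgh : ∀ y, g y ≤ h y + a) (x : α) :
    ballMaximal μ g x ≤ ballMaximal μ h x + a := by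
  refine ballMaximal_le_iff.2 fun c r hx => ?_
  calc ⨍⁻ y in ball c r, g y ∂μ
      ≤ (∫⁻ y in ball c r, h y ∂μ + a * μ (ball c r)) / μ (ball c r) := by
        rw [setLAverage_eq, ← setLIntegral_const, ← lintegral_add_right _ measurable_const]
        gcongr with y
        exact hgh y
    _ ≤ ballMaximal μ h x + a := by
        rw [ENNReal.add_div, ← setLAverage_eq]
        exact add_le_add (setLAverage_le_ballMaximal hx) (ENNReal.div_le_of_le_mul le_rfl)

variable [TopologicalSpace.SeparableSpace α] [OpensMeasurableSpace α] {D : ℝ≥0∞}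

lemma mul_measure_biUnion_ball_le (hD : ∀ x r, μ (ball x (4 * r)) ≤ D * μ (ball x r))
    {L : ℝ≥0∞} {t : Set (α × ℝ)} {R : ℝ} (htR : ∀ p ∈ t, p.2 ≤ R)
    (ht : ∀ p ∈ t, 0 < p.2 ∧ L * μ (ball p.1 p.2) ≤ ∫⁻ y in ball p.1 p.2, g y ∂μ) :
    L * μ (⋃ p ∈ t, ball p.1 p.2) ≤ D * ∫⁻ y, g y ∂μ := by
  obtain ⟨u, hut, hdisj, hcover⟩ :=
    Vitali.exists_disjoint_subfamily_covering_enlargement_ball t Prod.fst Prod.snd R htR 4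
      (by norm_num)
  have hu : u.Countable := hdisj.countable_of_isOpen (fun _ _ => isOpen_ball)
    fun p hp => nonempty_ball.2 (ht p (hut hp)).1
  calc L * μ (⋃ p ∈ t, ball p.1 p.2)
      ≤ L * μ (⋃ p ∈ u, ball p.1 (4 * p.2)) := by
        gcongr L * μ ?_
        refine iUnion₂_subset fun p hp => ?_
        obtain ⟨b, hb, hsub⟩ := hcover p hp
        exact hsub.trans (subset_biUnion_of_mem (u := fun p : α × ℝ => ball p.1 (4 * p.2)) hb)
    _ ≤ L * ∑' p : u, D * μ (ball p.1.1 p.1.2) := by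
        gcongr
        exact (measure_biUnion_le μ hu _).trans (ENNReal.tsum_le_tsum fun p => hD _ _)
    _ = D * ∑' p : u, L * μ (ball p.1.1 p.1.2) := by
        rw [ENNReal.tsum_mul_left, ENNReal.tsum_mul_left]
        ring
    _ ≤ D * ∑' p : u, ∫⁻ y in ball p.1.1 p.1.2, g y ∂μ := by
        gcongr with p
        exact (ht p (hut p.2)).2
    _ ≤ D * ∫⁻ y, g y ∂μ := by
        rw [← lintegral_biUnion hu (fun _ _ => measurableSet_ball) hdisj]
        gcongr D * ?_
        exact setLIntegral_le_lintegral _ _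

theorem mul_meas_lt_ballMaximal_le (hD : ∀ x r, μ (ball x (4 * r)) ≤ D * μ (ball x r))
    (L : ℝ≥0∞) : L * μ {x | L < ballMaximal μ g x} ≤ D * ∫⁻ y, g y ∂μ := by
  -- Vitali's lemma needs bounded radii: exhaust the level set by balls of radius at most `R`.
  set t : ℕ → Set (α × ℝ) :=
    fun R => {p | p.2 ≤ R ∧ 0 < p.2 ∧ L < ⨍⁻ y in ball p.1 p.2, g y ∂μ}
  have hunion : {x | L < ballMaximal μ g x} = ⋃ R : ℕ, ⋃ p ∈ t R, ball p.1 p.2 := by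
    ext x
    simp only [mem_ofPred_eq, lt_ballMaximal_iff, mem_iUnion, exists_prop]
    constructor
    · rintro ⟨c, r, hx, hL⟩
      exact ⟨⌈r⌉₊, (c, r), ⟨Nat.le_ceil r, pos_of_mem_ball hx, hL⟩, hx⟩
    · rintro ⟨R, p, ⟨-, -, hL⟩, hx⟩
      exact ⟨p.1, p.2, hx, hL⟩
  have hmono : Monotone fun R : ℕ => ⋃ p ∈ t R, ball p.1 p.2 := fun R R' hRR' =>
    biUnion_subset_biUnion_left fun p hp => ⟨hp.1.trans (by exact_mod_cast hRR'), hp.2⟩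
  rw [hunion, hmono.measure_iUnion, ENNReal.mul_iSup]
  refine iSup_le fun R => mul_measure_biUnion_ball_le hD (R := R) (fun p hp => hp.1)
    fun p hp => ⟨hp.2.1, ENNReal.mul_le_of_le_div ?_⟩
  rw [← setLAverage_eq]
  exact hp.2.2.le

lemma mul_meas_lt_ballMaximal_le_setLIntegral
    (hD : ∀ x r, μ (ball x (4 * r)) ≤ D * μ (ball x r)) (hg : Measurable g) (a : ℝ≥0∞) :
    a * μ {x | a < ballMaximal μ g x} ≤ 2 * D * ∫⁻ y in {y | a < 2 * g y}, g y ∂μ := by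
  set S := {y | a < 2 * g y}
  have hS : MeasurableSet S := measurableSet_lt measurable_const (hg.const_mul 2)
  have htrunc : ∀ y, g y ≤ S.indicator g y + a / 2 := by
    intro y
    by_cases hy : y ∈ S
    · simp [indicator_of_mem hy]
    · rw [indicator_of_notMem hy, zero_add, ENNReal.le_div_iff_mul_le (by simp) (by simp),
        mul_comm]
      exact not_lt.1 hy
  have hsub : {x | a < ballMaximal μ g x} ⊆ {x | a / 2 < ballMaximal μ (S.indicator g) x} := by
    intro x hx
    by_contra hle
    refine (not_lt.2 ?_) (show a < ballMaximal μ g x from hx)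
    calc ballMaximal μ g x ≤ ballMaximal μ (S.indicator g) x + a / 2 :=
          ballMaximal_le_add htrunc x
      _ ≤ a / 2 + a / 2 := by gcongr; exact not_lt.1 hle
      _ = a := ENNReal.add_halves a
  calc a * μ {x | a < ballMaximal μ g x}
      ≤ 2 * (a / 2 * μ {x | a / 2 < ballMaximal μ (S.indicator g) x}) := by
        rw [← mul_assoc, ENNReal.mul_div_cancel two_ne_zero ENNReal.ofNat_ne_top]
        gcongr
    _ ≤ 2 * D * ∫⁻ y in S, g y ∂μ := by
        rw [mul_assoc, ← lintegral_indicator hS]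
        gcongr 2 * ?_
        exact mul_meas_lt_ballMaximal_le hD _

theorem lintegral_ballMaximal_rpow_le [SFinite μ]
    (hD : ∀ x r, μ (ball x (4 * r)) ≤ D * μ (ball x r)) (hg : Measurable g) {q : ℝ}
    (hq : 1 < q) :
    ∫⁻ x, ballMaximal μ g x ^ q ∂μ ≤
      2 ^ (q - 1) * ENNReal.ofReal (q / (q - 1)) * (2 * D) * ∫⁻ y, g y ^ q ∂μ :=
  lintegral_rpow_le_of_mul_meas_lt_le measurable_ballMaximal hg hq fun _ _ =>
    mul_meas_lt_ballMaximal_le_setLIntegral hD hg _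

end BallMaximal

lemma MeasureTheory.Measure.addHaar_ball_four_mul_le {E : Type*} [NormedAddCommGroup E]
    [NormedSpace ℝ E] [MeasurableSpace E] [BorelSpace E] [FiniteDimensional ℝ E]
    (μ : Measure E) [μ.IsAddHaarMeasure] (x : E) (r : ℝ) :
    μ (ball x (4 * r)) ≤ 4 ^ Module.finrank ℝ E * μ (ball x r) := by
  rcases le_or_gt r 0 with hr | hr
  · simp [ball_eq_empty.2 (by linarith : 4 * r ≤ 0)]
  · rw [Measure.addHaar_ball_mul_of_pos μ x (by norm_num) r, Measure.addHaar_ball_center μ x r,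
      ENNReal.ofReal_pow (by norm_num), ENNReal.ofReal_ofNat]

lemma inv_mul_setLIntegral_eq_setLAverage {α : Type*} [MeasurableSpace α] (μ : Measure α)
    (s : Set α) (f : α → ℝ≥0∞) : (μ s)⁻¹ * ∫⁻ x in s, f x ∂μ = ⨍⁻ x in s, f x ∂μ := by
  rw [setLAverage_eq, div_eq_mul_inv, mul_comm]

section Averages

variable {α : Type*} [MeasurableSpace α] {μ : Measure α}

lemma inv_measure_univ_smul_apply_univ_le_one : ((μ univ)⁻¹ • μ) univ ≤ 1 := by
  rw [Measure.smul_apply, smul_eq_mul]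
  exact ENNReal.inv_mul_le_one _

lemma laverage_le_laverage_rpow_one_div {f : α → ℝ≥0∞} (hf : AEMeasurable f μ) {q : ℝ}
    (hq : 1 ≤ q) : ⨍⁻ x, f x ∂μ ≤ (⨍⁻ x, f x ^ q ∂μ) ^ (1 / q) := by
  rcases hq.eq_or_lt with rfl | hq
  · simp
  set ν := (μ univ)⁻¹ • μ
  calc ⨍⁻ x, f x ∂μ = ∫⁻ x, (f * 1) x ∂ν := by simp [laverage_eq', ν]
    _ ≤ (⨍⁻ x, f x ^ q ∂μ) ^ (1 / q) * (∫⁻ _, 1 ^ q.conjExponent ∂ν) ^ (1 / q.conjExponent) :=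
        ENNReal.lintegral_mul_le_Lp_mul_Lq ν (.conjExponent hq) (hf.smul_measure _)
          aemeasurable_const
    _ ≤ (⨍⁻ x, f x ^ q ∂μ) ^ (1 / q) := by
        rw [ENNReal.one_rpow, lintegral_one]
        refine mul_le_of_le_one_right'
          (ENNReal.rpow_le_one inv_measure_univ_smul_apply_univ_le_one ?_)
        have := (Real.HolderConjugate.conjExponent hq).symm.pos
        positivity

lemma laverage_add_const_rpow_le {f : α → ℝ≥0∞} (hf : AEMeasurable f μ) {q : ℝ} (hq : 1 ≤ q)
    (a : ℝ≥0∞) : (⨍⁻ x, (f x + a) ^ q ∂μ) ^ (1 / q) ≤ (⨍⁻ x, f x ^ q ∂μ) ^ (1 / q) + a := by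
  set ν := (μ univ)⁻¹ • μ
  calc (⨍⁻ x, (f x + a) ^ q ∂μ) ^ (1 / q)
      ≤ (⨍⁻ x, f x ^ q ∂μ) ^ (1 / q) + (∫⁻ _, a ^ q ∂ν) ^ (1 / q) :=
        ENNReal.lintegral_Lp_add_le (f := f) (g := fun _ => a) (hf.smul_measure _)
          aemeasurable_const hq
    _ ≤ (⨍⁻ x, f x ^ q ∂μ) ^ (1 / q) + a := by
        gcongr
        rw [lintegral_const]
        calc (a ^ q * ν univ) ^ (1 / q) ≤ (a ^ q) ^ (1 / q) := by
              gcongr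
              exact mul_le_of_le_one_right' inv_measure_univ_smul_apply_univ_le_one
          _ = a := by
              rw [← ENNReal.rpow_mul, mul_one_div_cancel (by linarith), ENNReal.rpow_one]

lemma inv_mul_setLIntegral_le_mul_setLAverage {s t : Set α} {κ : ℝ≥0∞}
    (hst : μ t ≤ κ * μ s) (ht : μ t ≠ ∞) (f : α → ℝ≥0∞) :
    (μ s)⁻¹ * ∫⁻ x in t, f x ∂μ ≤ κ * ⨍⁻ x in t, f x ∂μ := by
  rw [← measure_mul_setLAverage f ht]
  calc (μ s)⁻¹ * (μ t * ⨍⁻ x in t, f x ∂μ)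
      ≤ (μ s)⁻¹ * (κ * μ s * ⨍⁻ x in t, f x ∂μ) := by gcongr
    _ = κ * ((μ s)⁻¹ * μ s) * ⨍⁻ x in t, f x ∂μ := by ring
    _ ≤ κ * ⨍⁻ x in t, f x ∂μ := by
        gcongr
        exact mul_le_of_le_one_right' (ENNReal.inv_mul_le_one _)

end Averages

section EuclideanBalls

variable {n : ℕ}

lemma euclBall_eq_preimage (c : Fin n → ℝ) (r : ℝ) :
    euclBall n c r = WithLp.toLp 2 ⁻¹' ball (WithLp.toLp 2 c : EuclideanSpace ℝ (Fin n)) r := by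
  ext y
  rw [mem_preimage, Metric.mem_ball, EuclideanSpace.dist_eq]
  simp [euclBall, Real.dist_eq, sq_abs]

lemma measurableSet_euclBall (c : Fin n → ℝ) (r : ℝ) : MeasurableSet (euclBall n c r) := by
  rw [euclBall_eq_preimage]
  exact measurableSet_ball.preimage (WithLp.measurable_toLp 2 _)

lemma dist_lt_of_mem_euclBall {c y : Fin n → ℝ} {ρ : ℝ} (hy : y ∈ euclBall n c ρ) :
    dist y c < ρ := by
  rw [euclBall_eq_preimage, mem_preimage, Metric.mem_ball] at hy
  exact (dist_pi_lt_iff (dist_nonneg.trans_lt hy)).2 fun i =>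
    (PiLp.dist_apply_le _ _ i).trans_lt hy

lemma euclBall_subset_closedBall (c : Fin n → ℝ) (ρ : ℝ) : euclBall n c ρ ⊆ closedBall c ρ :=
  fun _ hy => mem_closedBall.2 (dist_lt_of_mem_euclBall hy).le

lemma euclBall_subset_closedBall_three_mul {x₀ x c : Fin n → ℝ} {r ρ : ℝ}
    (hx₀ : x ∈ closedBall x₀ r) (hx : x ∈ euclBall n c ρ) (hρr : ρ ≤ r) :
    euclBall n c ρ ⊆ closedBall x₀ (3 * r) := by
  intro y hy
  have hyc := dist_lt_of_mem_euclBall hy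
  have hxc := dist_lt_of_mem_euclBall hx
  rw [mem_closedBall] at hx₀ ⊢
  linarith [dist_triangle4 y c x x₀, dist_comm c x]

lemma setLAverage_euclBall (G : (Fin n → ℝ) → ℝ≥0∞) (c : Fin n → ℝ) (r : ℝ) :
    ⨍⁻ y in euclBall n c r, G y ∂volume =
      ⨍⁻ z in ball (WithLp.toLp 2 c : EuclideanSpace ℝ (Fin n)) r, G (WithLp.ofLp z) ∂volume := by
  have hpres := PiLp.volume_preserving_toLp (Fin n)
  have hemb := (MeasurableEquiv.toLp 2 (Fin n → ℝ)).measurableEmbedding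
  rw [setLAverage_eq, setLAverage_eq, euclBall_eq_preimage]
  congr 1
  · exact hpres.setLIntegral_comp_preimage_emb hemb (fun z => G (WithLp.ofLp z)) _
  · exact hpres.measure_preimage measurableSet_ball.nullMeasurableSet

noncomputable def cubeBallRatio (n : ℕ) : ℝ≥0∞ :=
  2 ^ n / volume (ball (0 : EuclideanSpace ℝ (Fin n)) 1)

lemma cubeBallRatio_ne_top : cubeBallRatio n ≠ ∞ :=
  ENNReal.div_ne_top (by simp) (measure_ball_pos volume _ one_pos).ne'

lemma cubeBallRatio_ne_zero : cubeBallRatio n ≠ 0 :=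
  (ENNReal.div_pos_iff.2 ⟨by simp, measure_ball_lt_top.ne⟩).ne'

lemma volume_closedBall_eq_cubeBallRatio_mul (c : Fin n → ℝ) {ρ : ℝ} (hρ : 0 < ρ) :
    volume (closedBall c ρ) = cubeBallRatio n * volume (euclBall n c ρ) := by
  rw [Real.volume_pi_closedBall c hρ.le, Fintype.card_fin, euclBall_eq_preimage,
    (PiLp.volume_preserving_toLp _).measure_preimage measurableSet_ball.nullMeasurableSet,
    Measure.addHaar_ball_of_pos _ _ hρ, finrank_euclideanSpace_fin, cubeBallRatio, mul_pow,
    ENNReal.ofReal_mul (by positivity), ENNReal.ofReal_pow zero_le_two, ENNReal.ofReal_ofNat,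
    mul_comm (ENNReal.ofReal _), ← mul_assoc, ENNReal.div_mul_cancel
      (measure_ball_pos volume _ one_pos).ne' measure_ball_lt_top.ne]

lemma setLAverage_euclBall_le (F : (Fin n → ℝ) → ℝ≥0∞) (c : Fin n → ℝ) {ρ : ℝ} (hρ : 0 < ρ) :
    ⨍⁻ y in euclBall n c ρ, F y ∂volume ≤
      cubeBallRatio n * ⨍⁻ y in closedBall c ρ, F y ∂volume := by
  rw [← inv_mul_setLIntegral_eq_setLAverage]
  calc (volume (euclBall n c ρ))⁻¹ * ∫⁻ y in euclBall n c ρ, F y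
      ≤ (volume (euclBall n c ρ))⁻¹ * ∫⁻ y in closedBall c ρ, F y := by
        gcongr
        exact euclBall_subset_closedBall c ρ
    _ ≤ _ := inv_mul_setLIntegral_le_mul_setLAverage
        (volume_closedBall_eq_cubeBallRatio_mul c hρ).le measure_closedBall_lt_top.ne F

lemma volume_closedBall_three_mul (x : Fin n → ℝ) {r : ℝ} (hr : 0 ≤ r) :
    volume (closedBall x (3 * r)) = 3 ^ n * volume (closedBall x r) := by
  rw [Real.volume_pi_closedBall x hr, Real.volume_pi_closedBall x (by positivity),
    Fintype.card_fin, show (2 * (3 * r)) ^ n = 3 ^ n * (2 * r) ^ n by rw [mul_left_comm, mul_pow],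
    ENNReal.ofReal_mul (by positivity), ENNReal.ofReal_pow (by norm_num), ENNReal.ofReal_ofNat]

end EuclideanBalls

section HardyLittlewood

variable {n : ℕ}

lemma hlMaximal_eq_iSup (f : (Fin n → ℝ) → ℂ) (x : Fin n → ℝ) :
    hlMaximal n f x = ⨆ (c : Fin n → ℝ) (r : ℝ) (_ : 0 < r) (_ : x ∈ euclBall n c r),
      ⨍⁻ y in euclBall n c r, ‖f y‖ₑ ∂volume := by
  simp only [hlMaximal, inv_mul_setLIntegral_eq_setLAverage]
  rfl

lemma setLAverage_le_hlMaximal (f : (Fin n → ℝ) → ℂ) {x c : Fin n → ℝ} {ρ : ℝ} (hρ : 0 < ρ)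
    (hx : x ∈ euclBall n c ρ) : ⨍⁻ y in euclBall n c ρ, ‖f y‖ₑ ∂volume ≤ hlMaximal n f x := by
  rw [hlMaximal_eq_iSup]
  exact le_iSup₂_of_le c ρ (le_iSup₂_of_le hρ hx le_rfl)

lemma hlMaximal_eq_ballMaximal (f : (Fin n → ℝ) → ℂ) (x : Fin n → ℝ) :
    hlMaximal n f x = ballMaximal volume
      (fun z : EuclideanSpace ℝ (Fin n) => ‖f (WithLp.ofLp z)‖ₑ) (WithLp.toLp 2 x) := by
  refine le_antisymm ?_ (ballMaximal_le_iff.2 fun c r hx => ?_)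
  · rw [hlMaximal_eq_iSup]
    refine iSup₂_le fun c r => iSup₂_le fun _ hx => ?_
    rw [setLAverage_euclBall]
    exact setLAverage_le_ballMaximal (by rwa [euclBall_eq_preimage] at hx)
  · have hx' : x ∈ euclBall n (WithLp.ofLp c) r := by rw [euclBall_eq_preimage]; exact hx
    have := setLAverage_le_hlMaximal f (pos_of_mem_ball hx) hx'
    rw [setLAverage_euclBall] at this
    exact this

lemma measurable_hlMaximal (f : (Fin n → ℝ) → ℂ) : Measurable (hlMaximal n f) := by
  simp_rw [funext (hlMaximal_eq_ballMaximal f)]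
  exact measurable_ballMaximal.comp (WithLp.measurable_toLp 2 _)

theorem lintegral_hlMaximal_rpow_le {f : (Fin n → ℝ) → ℂ} (hf : Measurable f) {q : ℝ}
    (hq : 1 < q) :
    ∫⁻ x, hlMaximal n f x ^ q ≤
      2 ^ (q - 1) * ENNReal.ofReal (q / (q - 1)) * (2 * 4 ^ n) * ∫⁻ x, ‖f x‖ₑ ^ q := by
  have hD : ∀ (x : EuclideanSpace ℝ (Fin n)) r,
      volume (ball x (4 * r)) ≤ 4 ^ n * volume (ball x r) := fun x r => by
    simpa only [finrank_euclideanSpace_fin] using Measure.addHaar_ball_four_mul_le volume x r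
  simp_rw [hlMaximal_eq_ballMaximal]
  rw [(PiLp.volume_preserving_toLp (Fin n)).lintegral_comp_emb
      (MeasurableEquiv.toLp 2 (Fin n → ℝ)).measurableEmbedding
      (fun z => ballMaximal volume _ z ^ q),
    ← (PiLp.volume_preserving_ofLp (Fin n)).lintegral_comp_emb
      (MeasurableEquiv.toLp 2 (Fin n → ℝ)).symm.measurableEmbedding (fun x => ‖f x‖ₑ ^ q)]
  exact lintegral_ballMaximal_rpow_le hD (hf.comp (WithLp.measurable_ofLp 2 _)).enorm hq

end HardyLittlewood

section Morrey

variable {n : ℕ} {q : ℝ} {φ : ℝ → ℝ}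

lemma ofReal_mul_setLAverage_rpow_le_morreyNormE (F : (Fin n → ℝ) → ℝ≥0∞) (x : Fin n → ℝ)
    {r : ℝ} (hr : 0 < r) :
    ENNReal.ofReal (φ r) * (⨍⁻ y in closedBall x r, F y ^ q ∂volume) ^ (1 / q) ≤
      morreyNormE n q φ F := by
  rw [← inv_mul_setLIntegral_eq_setLAverage]
  exact le_iSup₂_of_le x r (le_iSup_of_le hr le_rfl)

lemma morreyNormE_le {F : (Fin n → ℝ) → ℝ≥0∞} {A : ℝ≥0∞}
    (h : ∀ x r, 0 < r →
      ENNReal.ofReal (φ r) * (⨍⁻ y in closedBall x r, F y ^ q ∂volume) ^ (1 / q) ≤ A) :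
    morreyNormE n q φ F ≤ A := by
  refine iSup₂_le fun x r => iSup_le fun hr => ?_
  rw [inv_mul_setLIntegral_eq_setLAverage]
  exact h x r hr

lemma setLAverage_rpow_le_inv_mul_morreyNormE (F : (Fin n → ℝ) → ℝ≥0∞) (x : Fin n → ℝ)
    {r ρ : ℝ} (hφr : 0 < φ r) (hφ : φ r ≤ φ ρ) (hρ : 0 < ρ) :
    (⨍⁻ y in closedBall x ρ, F y ^ q ∂volume) ^ (1 / q) ≤
      (ENNReal.ofReal (φ r))⁻¹ * morreyNormE n q φ F := by
  have hφρ : ENNReal.ofReal (φ ρ) ≠ 0 := by simpa using hφr.trans_le hφ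
  calc (⨍⁻ y in closedBall x ρ, F y ^ q ∂volume) ^ (1 / q)
      ≤ (ENNReal.ofReal (φ ρ))⁻¹ * morreyNormE n q φ F :=
        (ENNReal.mul_le_iff_le_inv hφρ ENNReal.ofReal_ne_top).1
          (ofReal_mul_setLAverage_rpow_le_morreyNormE F x hρ)
    _ ≤ (ENNReal.ofReal (φ r))⁻¹ * morreyNormE n q φ F := by gcongr

lemma hlMaximal_le_hlMaximal_indicator_add (hq : 1 ≤ q) {r : ℝ} (hφr : 0 < φ r)
    (hφ : ∀ ρ, r ≤ ρ → φ r ≤ φ ρ) {f : (Fin n → ℝ) → ℂ} (hf : Measurable f)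
    {x₀ x : Fin n → ℝ} (hx : x ∈ closedBall x₀ r) :
    hlMaximal n f x ≤ hlMaximal n ((closedBall x₀ (3 * r)).indicator f) x +
      cubeBallRatio n * ((ENNReal.ofReal (φ r))⁻¹ * morreyNorm n q φ f) := by
  rw [hlMaximal_eq_iSup]
  refine iSup₂_le fun c ρ => iSup₂_le fun hρ hxB => ?_
  rcases le_or_gt ρ r with hρr | hρr
  · have hsub := euclBall_subset_closedBall_three_mul hx hxB hρr
    calc ⨍⁻ y in euclBall n c ρ, ‖f y‖ₑ ∂volume
        = ⨍⁻ y in euclBall n c ρ, ‖(closedBall x₀ (3 * r)).indicator f y‖ₑ ∂volume :=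
          setLAverage_congr_fun (measurableSet_euclBall c ρ) fun y hy => by
            rw [indicator_of_mem (hsub hy)]
      _ ≤ hlMaximal n ((closedBall x₀ (3 * r)).indicator f) x :=
          setLAverage_le_hlMaximal _ hρ hxB
      _ ≤ _ := le_self_add
  · calc ⨍⁻ y in euclBall n c ρ, ‖f y‖ₑ ∂volume
        ≤ cubeBallRatio n * ⨍⁻ y in closedBall c ρ, ‖f y‖ₑ ∂volume :=
          setLAverage_euclBall_le _ c hρ
      _ ≤ cubeBallRatio n * (⨍⁻ y in closedBall c ρ, ‖f y‖ₑ ^ q ∂volume) ^ (1 / q) := by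
          gcongr
          exact laverage_le_laverage_rpow_one_div hf.enorm.aemeasurable hq
      _ ≤ cubeBallRatio n * ((ENNReal.ofReal (φ r))⁻¹ * morreyNorm n q φ f) := by
          gcongr
          exact setLAverage_rpow_le_inv_mul_morreyNormE _ c hφr (hφ ρ hρr.le) hρ
      _ ≤ _ := le_add_self

lemma setLAverage_hlMaximal_indicator_rpow_le (hq : 1 < q) {r : ℝ} (hr : 0 < r)
    (hφr : 0 < φ r) (hφ : φ r ≤ φ (3 * r)) {f : (Fin n → ℝ) → ℂ} (hf : Measurable f)
    (x₀ : Fin n → ℝ) :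
    (⨍⁻ y in closedBall x₀ r,
        hlMaximal n ((closedBall x₀ (3 * r)).indicator f) y ^ q ∂volume) ^ (1 / q) ≤
      (2 ^ (q - 1) * ENNReal.ofReal (q / (q - 1)) * (2 * 4 ^ n) * 3 ^ n) ^ (1 / q) *
        ((ENNReal.ofReal (φ r))⁻¹ * morreyNorm n q φ f) := by
  set Q3 := closedBall x₀ (3 * r)
  set C := 2 ^ (q - 1) * ENNReal.ofReal (q / (q - 1)) * (2 * 4 ^ n)
  have hind : ∫⁻ y, ‖Q3.indicator f y‖ₑ ^ q = ∫⁻ y in Q3, ‖f y‖ₑ ^ q := by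
    rw [← lintegral_indicator measurableSet_closedBall]
    refine lintegral_congr fun y => ?_
    by_cases hy : y ∈ closedBall x₀ (3 * r)
    · simp [Q3, indicator_of_mem hy]
    · simp [Q3, indicator_of_notMem hy, ENNReal.zero_rpow_of_pos (by linarith : 0 < q)]
  have hlocal : ⨍⁻ y in closedBall x₀ r, hlMaximal n (Q3.indicator f) y ^ q ∂volume ≤
      C * 3 ^ n * ⨍⁻ y in Q3, ‖f y‖ₑ ^ q ∂volume := by
    rw [← inv_mul_setLIntegral_eq_setLAverage, mul_assoc]
    calc (volume (closedBall x₀ r))⁻¹ *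
          ∫⁻ y in closedBall x₀ r, hlMaximal n (Q3.indicator f) y ^ q
        ≤ (volume (closedBall x₀ r))⁻¹ * (C * ∫⁻ y in Q3, ‖f y‖ₑ ^ q) := by
          gcongr
          exact (setLIntegral_le_lintegral _ _).trans
            (hind ▸ lintegral_hlMaximal_rpow_le (hf.indicator measurableSet_closedBall) hq)
      _ = C * ((volume (closedBall x₀ r))⁻¹ * ∫⁻ y in Q3, ‖f y‖ₑ ^ q) := by ring
      _ ≤ C * (3 ^ n * ⨍⁻ y in Q3, ‖f y‖ₑ ^ q ∂volume) := by
          gcongr C * ?_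
          exact inv_mul_setLIntegral_le_mul_setLAverage
            (volume_closedBall_three_mul x₀ hr.le).le measure_closedBall_lt_top.ne _
  calc (⨍⁻ y in closedBall x₀ r, hlMaximal n (Q3.indicator f) y ^ q ∂volume) ^ (1 / q)
      ≤ (C * 3 ^ n) ^ (1 / q) * (⨍⁻ y in Q3, ‖f y‖ₑ ^ q ∂volume) ^ (1 / q) := by
        rw [← ENNReal.mul_rpow_of_nonneg _ _ (by positivity)]
        gcongr
    _ ≤ (C * 3 ^ n) ^ (1 / q) * ((ENNReal.ofReal (φ r))⁻¹ * morreyNorm n q φ f) := by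
        gcongr
        exact setLAverage_rpow_le_inv_mul_morreyNormE _ x₀ hφr hφ (by linarith)

noncomputable def morreyConst (n : ℕ) (q : ℝ) : ℝ≥0∞ :=
  (2 ^ (q - 1) * ENNReal.ofReal (q / (q - 1)) * (2 * 4 ^ n) * 3 ^ n) ^ (1 / q) +
    cubeBallRatio n

lemma morreyConst_ne_top (hq : 0 < q) : morreyConst n q ≠ ∞ :=
  ENNReal.add_ne_top.2 ⟨ENNReal.rpow_ne_top_of_nonneg (by positivity) (by finiteness),
    cubeBallRatio_ne_top⟩

lemma morreyConst_ne_zero : morreyConst n q ≠ 0 :=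
  fun h => cubeBallRatio_ne_zero (add_eq_zero.1 h).2

lemma setLAverage_hlMaximal_rpow_le (hq : 1 < q) {r : ℝ} (hr : 0 < r) (hφr : 0 < φ r)
    (hφ : ∀ ρ, r ≤ ρ → φ r ≤ φ ρ) {f : (Fin n → ℝ) → ℂ} (hf : Measurable f)
    (x₀ : Fin n → ℝ) :
    (⨍⁻ y in closedBall x₀ r, hlMaximal n f y ^ q ∂volume) ^ (1 / q) ≤
      morreyConst n q * ((ENNReal.ofReal (φ r))⁻¹ * morreyNorm n q φ f) := by
  set B := (ENNReal.ofReal (φ r))⁻¹ * morreyNorm n q φ f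
  set f₁ := (closedBall x₀ (3 * r)).indicator f
  calc (⨍⁻ y in closedBall x₀ r, hlMaximal n f y ^ q ∂volume) ^ (1 / q)
      ≤ (⨍⁻ y in closedBall x₀ r, (hlMaximal n f₁ y + cubeBallRatio n * B) ^ q ∂volume) ^
          (1 / q) := by
        refine ENNReal.rpow_le_rpow (laverage_mono_ae
          ((ae_restrict_iff' measurableSet_closedBall).2 (.of_forall fun y hy => ?_)))
          (by positivity)
        exact ENNReal.rpow_le_rpow (hlMaximal_le_hlMaximal_indicator_add hq.le hφr hφ hf hy)
          (by positivity)
    _ ≤ (⨍⁻ y in closedBall x₀ r, hlMaximal n f₁ y ^ q ∂volume) ^ (1 / q) +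
          cubeBallRatio n * B :=
        laverage_add_const_rpow_le (measurable_hlMaximal _).aemeasurable hq.le _
    _ ≤ morreyConst n q * B := by
        rw [morreyConst, add_mul]
        gcongr
        exact setLAverage_hlMaximal_indicator_rpow_le hq hr hφr (hφ _ (by linarith)) hf x₀

theorem morreyNormE_hlMaximal_le (hq : 1 < q) (hφpos : ∀ t, 0 < t → 0 < φ t)
    (hφmono : ∀ s t, 0 < s → s ≤ t → φ s ≤ φ t) {f : (Fin n → ℝ) → ℂ} (hf : Measurable f) :
    morreyNormE n q φ (hlMaximal n f) ≤ morreyConst n q * morreyNorm n q φ f := by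
  refine morreyNormE_le fun x r hr => ?_
  have hφr : ENNReal.ofReal (φ r) ≠ 0 := by simpa using hφpos r hr
  calc ENNReal.ofReal (φ r) * (⨍⁻ y in closedBall x r, hlMaximal n f y ^ q ∂volume) ^ (1 / q)
      ≤ ENNReal.ofReal (φ r) *
          (morreyConst n q * ((ENNReal.ofReal (φ r))⁻¹ * morreyNorm n q φ f)) := by
        gcongr
        exact setLAverage_hlMaximal_rpow_le hq hr (hφpos r hr) (fun ρ => hφmono r ρ hr) hf x
    _ = morreyConst n q * morreyNorm n q φ f := by
        rw [mul_left_comm, ← mul_assoc (ENNReal.ofReal _),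
          ENNReal.mul_inv_cancel hφr ENNReal.ofReal_ne_top, one_mul]

end Morrey

/-- for `1 < q < ∞` there is a constant `C > 0`, depending only
on `n` and `q`, such that for every `φ ∈ G_q` and every measurable `f`,
`‖Mf‖_{M^φ_q} ≤ C ‖f‖_{M^φ_q}`. -/
theorem maximal_bounded_morrey (n : ℕ) (q : ℝ) (hq : 1 < q) :
    ∃ C : ℝ, 0 < C ∧ ∀ φ : ℝ → ℝ, IsGq n q φ →
      ∀ f : (Fin n → ℝ) → ℂ, Measurable f →
        morreyNormE n q φ (hlMaximal n f) ≤
          ENNReal.ofReal C * morreyNorm n q φ f := by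
  have hC := morreyConst_ne_top (n := n) (by linarith : 0 < q)
  refine ⟨(morreyConst n q).toReal, ENNReal.toReal_pos morreyConst_ne_zero hC,
    fun φ ⟨hφpos, hφmono, _⟩ f hf => ?_⟩
  rw [ENNReal.ofReal_toReal hC]
  exact morreyNormE_hlMaximal_le hq hφpos hφmono hf
end

section
/- Let φ:(0,∞)→(0,∞) be almost increasing, i.e. there is a constant A≥1 with φ(t) ≤ A·φ(s) whenever 0<t<s. Then the following are equivalent: (1) there is a constant C>0 such that ∫_r^∞ dt/(φ(t)·t) ≤ C/φ(r) for all r>0; (2) there exists m₀ ∈ ℕ such that φ(2^{m₀} r) > 2φ(r) for all r>0. -/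
/-! On the block `[aᵏ r, aᵏ⁺¹ r]` the doubling condition at scale `a` and almost monotonicity
give `φ ≥ 2ᵏ φ(r) / A`, so the tail integral is dominated by the geometric series
`∑ₖ A log a / (2ᵏ φ(r))`. Conversely, the part of the tail integral over `[r, a r]` alone is at
least `log a / (A φ(a r))`, so the integral condition forces `φ(a r) ≥ log a · φ(r) / (A C)`,
which exceeds `2 φ(r)` as soon as `log a > 2 A C`. -/

open MeasureTheory Set Real

def AlmostIncreasing (A : ℝ) (φ : ℝ → ℝ) : Prop :=
  ∀ t s, 0 < t → t < s → φ t ≤ A * φ s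

variable {φ : ℝ → ℝ} {A C a c r u v : ℝ}

lemma AlmostIncreasing.const_pos (hpos : ∀ t, 0 < t → 0 < φ t) (hai : AlmostIncreasing A φ) :
    0 < A :=
  pos_of_mul_pos_left ((hpos 1 one_pos).trans_le (hai 1 2 one_pos one_lt_two)) (hpos 2 two_pos).le

lemma setLIntegral_Ioo_ofReal_mul_inv (hc : 0 ≤ c) (hu : 0 < u) (huv : u ≤ v) :
    ∫⁻ t in Ioo u v, ENNReal.ofReal (c * t⁻¹) = ENNReal.ofReal (c * log (v / u)) := by
  have hint : IntegrableOn (fun t : ℝ => c * t⁻¹) (Ioo u v) :=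
    (continuousOn_const.mul (continuousOn_inv₀.mono fun t ht => (hu.trans_le ht.1).ne')
      |>.integrableOn_Icc).mono_set Ioo_subset_Icc_self
  rw [← ofReal_integral_eq_lintegral_ofReal hint, ← integral_Ioc_eq_integral_Ioo,
    ← intervalIntegral.integral_of_le huv, intervalIntegral.integral_const_mul,
    integral_inv_of_pos hu (hu.trans_le huv)]
  filter_upwards [ae_restrict_mem measurableSet_Ioo] with t ht
  exact mul_nonneg hc (inv_nonneg.2 (hu.trans ht.1).le)

lemma Ici_subset_iUnion_Ico_pow_mul (ha : 1 < a) (hr : 0 < r) :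
    Ici r ⊆ ⋃ k : ℕ, Ico (a ^ k * r) (a ^ (k + 1) * r) := by
  intro t ht
  obtain ⟨k, hk, hk'⟩ := exists_nat_pow_near ((one_le_div hr).2 ht) ha
  exact mem_iUnion.2 ⟨k, (le_div_iff₀ hr).1 hk, (div_lt_iff₀ hr).1 hk'⟩

lemma two_pow_mul_le_of_two_mul_lt (ha : 0 < a) (h : ∀ r, 0 < r → 2 * φ r < φ (a * r)) (k : ℕ)
    (hr : 0 < r) : 2 ^ k * φ r ≤ φ (a ^ k * r) := by
  induction k with
  | zero => simp
  | succ k ih =>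
    calc 2 ^ (k + 1) * φ r = 2 * (2 ^ k * φ r) := by ring
      _ ≤ 2 * φ (a ^ k * r) := by linarith
      _ ≤ φ (a ^ (k + 1) * r) := by
        rw [pow_succ', mul_assoc]; exact (h _ (by positivity)).le

lemma ofReal_mul_log_le_lintegral_Ioi (hpos : ∀ t, 0 < t → 0 < φ t) (hai : AlmostIncreasing A φ)
    (hr : 0 < r) (hrv : r ≤ v) :
    ENNReal.ofReal ((A * φ v)⁻¹ * log (v / r)) ≤
      ∫⁻ t in Ioi r, ENNReal.ofReal (1 / (φ t * t)) := by
  have hAφ : 0 < A * φ v := mul_pos (hai.const_pos hpos) (hpos v (hr.trans_le hrv))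
  calc ENNReal.ofReal ((A * φ v)⁻¹ * log (v / r))
      = ∫⁻ t in Ioo r v, ENNReal.ofReal ((A * φ v)⁻¹ * t⁻¹) :=
        (setLIntegral_Ioo_ofReal_mul_inv (inv_nonneg.2 hAφ.le) hr hrv).symm
    _ ≤ ∫⁻ t in Ioo r v, ENNReal.ofReal (1 / (φ t * t)) := by
        refine setLIntegral_mono' measurableSet_Ioo fun t ht => ENNReal.ofReal_le_ofReal ?_
        have ht0 : 0 < t := hr.trans ht.1
        rw [← mul_inv, one_div]
        exact inv_anti₀ (mul_pos (hpos t ht0) ht0)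
          (mul_le_mul_of_nonneg_right (hai t v ht0 ht.2) ht0.le)
    _ ≤ ∫⁻ t in Ioi r, ENNReal.ofReal (1 / (φ t * t)) :=
        lintegral_mono_set Ioo_subset_Ioi_self

lemma setLIntegral_Ioo_le_ofReal_mul_log (hpos : ∀ t, 0 < t → 0 < φ t)
    (hai : AlmostIncreasing A φ) (hu : 0 < u) (huv : u ≤ v) :
    ∫⁻ t in Ioo u v, ENNReal.ofReal (1 / (φ t * t)) ≤
      ENNReal.ofReal (A / φ u * log (v / u)) := by
  rw [← setLIntegral_Ioo_ofReal_mul_inv (div_nonneg (hai.const_pos hpos).le (hpos u hu).le) hu huv]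
  refine setLIntegral_mono' measurableSet_Ioo fun t ht => ENNReal.ofReal_le_ofReal ?_
  have ht0 : 0 < t := hu.trans ht.1
  rw [one_div, mul_inv]
  gcongr
  rw [inv_le_iff_one_le_mul₀ (hpos t ht0), div_mul_eq_mul_div, one_le_div (hpos u hu)]
  exact hai u t hu ht.1

lemma lintegral_Ioi_le_of_two_mul_lt (hpos : ∀ t, 0 < t → 0 < φ t) (hai : AlmostIncreasing A φ)
    (ha : 1 < a) (h : ∀ r, 0 < r → 2 * φ r < φ (a * r)) (hr : 0 < r) :
    ∫⁻ t in Ioi r, ENNReal.ofReal (1 / (φ t * t)) ≤ ENNReal.ofReal (2 * A * log a / φ r) := by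
  have hA := hai.const_pos hpos
  have ha0 : 0 < a := one_pos.trans ha
  have hlog := log_pos ha
  have hφr := hpos r hr
  have hblock (k : ℕ) : ∫⁻ t in Ico (a ^ k * r) (a ^ (k + 1) * r), ENNReal.ofReal (1 / (φ t * t)) ≤
      ENNReal.ofReal (A * log a / φ r * 2⁻¹ ^ k) := by
    have hu : 0 < a ^ k * r := by positivity
    rw [← setLIntegral_congr Ioo_ae_eq_Ico]
    refine (setLIntegral_Ioo_le_ofReal_mul_log hpos hai hu ?_).trans (ENNReal.ofReal_le_ofReal ?_)
    · exact mul_le_mul_of_nonneg_right (pow_le_pow_right₀ ha.le k.le_succ) hr.le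
    have hquot : a ^ (k + 1) * r / (a ^ k * r) = a := by field_simp; ring
    have hgrowth := two_pow_mul_le_of_two_mul_lt ha0 h k hr
    calc A / φ (a ^ k * r) * log (a ^ (k + 1) * r / (a ^ k * r))
        ≤ A / (2 ^ k * φ r) * log a := by rw [hquot]; gcongr
      _ = A * log a / φ r * 2⁻¹ ^ k := by rw [inv_pow]; field_simp
  calc ∫⁻ t in Ioi r, ENNReal.ofReal (1 / (φ t * t))
      ≤ ∫⁻ t in ⋃ k : ℕ, Ico (a ^ k * r) (a ^ (k + 1) * r), ENNReal.ofReal (1 / (φ t * t)) :=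
        lintegral_mono_set (Ioi_subset_Ici_self.trans (Ici_subset_iUnion_Ico_pow_mul ha hr))
    _ ≤ ∑' k : ℕ, ∫⁻ t in Ico (a ^ k * r) (a ^ (k + 1) * r), ENNReal.ofReal (1 / (φ t * t)) :=
        lintegral_iUnion_le _ _
    _ ≤ ∑' k : ℕ, ENNReal.ofReal (A * log a / φ r * 2⁻¹ ^ k) := ENNReal.tsum_le_tsum hblock
    _ = ENNReal.ofReal (2 * A * log a / φ r) := by
        rw [← ENNReal.ofReal_tsum_of_nonneg (fun k => by positivity)
          ((summable_geometric_of_lt_one (by norm_num) (by norm_num)).mul_left _),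
          tsum_mul_left, tsum_geometric_inv_two]
        ring_nf

lemma two_mul_lt_of_lintegral_Ioi_le (hpos : ∀ t, 0 < t → 0 < φ t) (hai : AlmostIncreasing A φ)
    (hC : 0 < C)
    (hint : ∀ r, 0 < r → ∫⁻ t in Ioi r, ENNReal.ofReal (1 / (φ t * t)) ≤ ENNReal.ofReal (C / φ r))
    (ha : 1 ≤ a) (hlog : 2 * A * C < log a) (hr : 0 < r) : 2 * φ r < φ (a * r) := by
  have hA := hai.const_pos hpos
  have hφr := hpos r hr
  have hφar := hpos (a * r) (by positivity)
  have key := (ofReal_mul_log_le_lintegral_Ioi hpos hai hr (le_mul_of_one_le_left hr.le ha)).trans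
    (hint r hr)
  rw [ENNReal.ofReal_le_ofReal_iff (by positivity), mul_div_cancel_right₀ _ hr.ne',
    inv_mul_le_iff₀ (by positivity)] at key
  have : A * C * (2 * φ r) < A * C * φ (a * r) :=
    calc A * C * (2 * φ r) = 2 * A * C * φ r := by ring
      _ < log a * φ r := mul_lt_mul_of_pos_right hlog hφr
      _ ≤ A * φ (a * r) * (C / φ r) * φ r := mul_le_mul_of_nonneg_right key hφr.le
      _ = A * C * φ (a * r) := by field_simp
  exact lt_of_mul_lt_mul_left this (mul_pos hA hC).le

theorem integral_condition_iff_doubling_growth_general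
    (φ : ℝ → ℝ) (hpos : ∀ t, 0 < t → 0 < φ t)
    (A : ℝ)
    (hai : ∀ t s, 0 < t → t < s → φ t ≤ A * φ s) :
    (∃ C : ℝ, 0 < C ∧ ∀ r : ℝ, 0 < r →
        ∫⁻ t in Set.Ioi r, ENNReal.ofReal (1 / (φ t * t)) ≤
          ENNReal.ofReal (C / φ r)) ↔
      (∃ m₀ : ℕ, ∀ r : ℝ, 0 < r → 2 * φ r < φ ((2 : ℝ) ^ m₀ * r)) := by
  have hA : 0 < A := AlmostIncreasing.const_pos hpos hai
  constructor
  · rintro ⟨C, hC, hint⟩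
    obtain ⟨m, hm⟩ := exists_nat_gt (2 * A * C / log 2)
    refine ⟨m, fun r hr => two_mul_lt_of_lintegral_Ioi_le hpos hai hC hint
      (one_le_pow₀ one_le_two) ?_ hr⟩
    rwa [Real.log_pow, ← div_lt_iff₀ (log_pos one_lt_two)]
  · rintro ⟨m, hm⟩
    have hm0 : m ≠ 0 := by
      rintro rfl
      have := hm 1 one_pos
      simp only [pow_zero, one_mul] at this
      linarith [hpos 1 one_pos]
    have ha : (1 : ℝ) < 2 ^ m := one_lt_pow₀ one_lt_two hm0
    exact ⟨2 * A * log (2 ^ m), by have := log_pos ha; positivity,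
      fun r hr => lintegral_Ioi_le_of_two_mul_lt hpos hai ha hm hr⟩

/-- for an almost increasing `φ : (0,∞) → (0,∞)` (with almost
increasing constant `A ≥ 1`), the integral condition
`∫_r^∞ dt/(φ(t)t) ≤ C/φ(r)` (for all `r>0`, some `C>0`) holds iff there is
`m₀ ∈ ℕ` with `φ(2^{m₀} r) > 2 φ(r)` for all `r>0`. -/
theorem integral_condition_iff_doubling_growth
    (φ : ℝ → ℝ) (hpos : ∀ t, 0 < t → 0 < φ t)
    (A : ℝ) (hA : 1 ≤ A)
    (hai : ∀ t s, 0 < t → t < s → φ t ≤ A * φ s) :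
    (∃ C : ℝ, 0 < C ∧ ∀ r : ℝ, 0 < r →
        ∫⁻ t in Set.Ioi r, ENNReal.ofReal (1 / (φ t * t)) ≤
          ENNReal.ofReal (C / φ r)) ↔
      (∃ m₀ : ℕ, ∀ r : ℝ, 0 < r → 2 * φ r < φ ((2 : ℝ) ^ m₀ * r)) :=
  integral_condition_iff_doubling_growth_general φ hpos A hai
end

section
/- Let ψ:(0,∞)→[0,∞) be locally integrable and let D>0 satisfy ∫_r^∞ ψ(t)·t^{−1} dt ≤ D·ψ(r) for all r>0. Then for every ε with 0<ε<D^{−1} and every r>0, ∫_r^∞ ψ(t)·t^{ε−1} dt ≤ (r^ε/(1−Dε))·∫_r^∞ ψ(t)·t^{−1} dt ≤ (D/(1−Dε))·ψ(r)·r^ε. -/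
open MeasureTheory Set
open scoped ENNReal NNReal

/-! Write `t^ε = r^ε + ∫_r^t ε s^(ε-1) ds` and swap the order of integration: the resulting double
integral is `ε ∫_r^∞ s^(ε-1) ∫_s^∞ ψ(t)/t dt ds`, which by hypothesis is at most `Dε` times the
left-hand side. Since `Dε < 1` it can be absorbed, giving the first inequality; the second one is the
hypothesis at `r`. To make the absorption legitimate one first integrates over `(r, R)` only, where the
left-hand side is finite (at most `R^ε ∫_r^∞ ψ(t)/t dt ≤ R^ε D ψ(r)`), and then lets `R → ∞`. -/

theorem ENNReal.le_div_one_sub_of_le_add_mul {x a q : ℝ≥0∞} (hq : q < 1) (hx : x ≠ ∞)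
    (h : x ≤ a + q * x) : x ≤ a / (1 - q) := by
  rw [ENNReal.le_div_iff_mul_le (Or.inl (tsub_pos_of_lt hq).ne') (Or.inl (by simp)), mul_comm,
    ENNReal.sub_mul fun _ _ => hx, one_mul]
  exact tsub_le_iff_right.mpr h

theorem setLIntegral_Ioo_lintegral_Ioo_mul_swap {μ : Measure ℝ} [SFinite μ] {c g : ℝ → ℝ≥0∞}
    (hc : Measurable c) (hg : Measurable g) (a b : ℝ) :
    ∫⁻ t in Ioo a b, (∫⁻ s in Ioo a t, c s ∂μ) * g t ∂μ =
      ∫⁻ s in Ioo a b, c s * ∫⁻ t in Ioo s b, g t ∂μ ∂μ := by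
  set Φ : ℝ → ℝ → ℝ≥0∞ := fun s t => (Iio t).indicator c s * g t
  have hΦ : Measurable (Function.uncurry Φ) :=
    ((hc.comp measurable_fst).indicator (measurableSet_lt measurable_fst measurable_snd)).mul
      (hg.comp measurable_snd)
  calc ∫⁻ t in Ioo a b, (∫⁻ s in Ioo a t, c s ∂μ) * g t ∂μ
      = ∫⁻ t in Ioo a b, ∫⁻ s in Ioo a b, Φ s t ∂μ ∂μ := by
        refine setLIntegral_congr_fun measurableSet_Ioo fun t ht => ?_
        rw [lintegral_mul_const _ (hc.indicator measurableSet_Iio),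
          lintegral_indicator measurableSet_Iio, Measure.restrict_restrict measurableSet_Iio,
          Iio_inter_Ioo, min_eq_left ht.2.le]
    _ = ∫⁻ s in Ioo a b, ∫⁻ t in Ioo a b, Φ s t ∂μ ∂μ :=
        lintegral_lintegral_swap (hΦ.comp measurable_swap).aemeasurable
    _ = ∫⁻ s in Ioo a b, c s * ∫⁻ t in Ioo s b, g t ∂μ ∂μ := by
        refine setLIntegral_congr_fun measurableSet_Ioo fun s hs => ?_
        have hΦs : Φ s = (Ioi s).indicator fun t => c s * g t := by
          ext t; by_cases hst : s < t <;> simp [Φ, hst]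
        rw [hΦs, lintegral_indicator measurableSet_Ioi, Measure.restrict_restrict measurableSet_Ioi,
          Ioi_inter_Ioo, max_eq_left hs.1.le, lintegral_const_mul _ hg]

theorem ofReal_rpow_eq_add_setLIntegral_Ioo {ε r t : ℝ} (hε : 0 < ε) (hr : 0 ≤ r) (hrt : r ≤ t) :
    ENNReal.ofReal (t ^ ε) =
      ENNReal.ofReal (r ^ ε) + ∫⁻ s in Ioo r t, ENNReal.ofReal (ε * s ^ (ε - 1)) := by
  have hint : IntegrableOn (fun s : ℝ => ε * s ^ (ε - 1)) (Ioc r t) :=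
    ((intervalIntegral.intervalIntegrable_rpow' (by linarith)).const_mul ε).1
  have hmono : r ^ ε ≤ t ^ ε := Real.rpow_le_rpow hr hrt hε.le
  rw [← ofReal_integral_eq_lintegral_ofReal (hint.mono_set Ioo_subset_Ioc_self),
    ← integral_Ioc_eq_integral_Ioo, ← intervalIntegral.integral_of_le hrt,
    intervalIntegral.integral_const_mul, integral_rpow (Or.inl (by linarith)), sub_add_cancel,
    mul_div_cancel₀ _ hε.ne', ← ENNReal.ofReal_add (by positivity) (sub_nonneg.2 hmono),
    add_sub_cancel]
  filter_upwards [ae_restrict_mem measurableSet_Ioo] with s hs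
  have := hr.trans_lt hs.1
  positivity

theorem setLIntegral_Ioi_le_of_forall_setLIntegral_Ioo_le {f : ℝ → ℝ≥0∞} {μ : Measure ℝ}
    {r : ℝ} {C : ℝ≥0∞} (h : ∀ R, ∫⁻ t in Ioo r R, f t ∂μ ≤ C) : ∫⁻ t in Ioi r, f t ∂μ ≤ C := by
  have hcover : ⋃ n : ℕ, Ioo r n = Ioi r := by
    ext t
    simpa using fun _ => exists_nat_gt t
  rw [← hcover, setLIntegral_iUnion_of_directed _ (Monotone.directed_le fun m n hmn =>
    Ioo_subset_Ioo_right (Nat.mono_cast hmn))]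
  exact iSup_le fun n => h n

theorem ENNReal.ofReal_mul_rpow_sub_one {x t : ℝ} (ε : ℝ) (ht : 0 < t) :
    ENNReal.ofReal (x * t ^ (ε - 1)) = ENNReal.ofReal (t ^ ε) * ENNReal.ofReal (x / t) := by
  rw [← ENNReal.ofReal_mul (by positivity), Real.rpow_sub_one ht.ne']
  ring_nf

section Nakai

variable {ψ : ℝ → ℝ} {D ε r : ℝ}

theorem setLIntegral_Ioo_mul_rpow_le_add (hmeas : Measurable ψ) (hnn : ∀ t, 0 < t → 0 ≤ ψ t)
    (hD : 0 ≤ D)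
    (h : ∀ s : ℝ, 0 < s →
      ∫⁻ t in Ioi s, ENNReal.ofReal (ψ t / t) ≤ ENNReal.ofReal (D * ψ s))
    (hε : 0 < ε) (hr : 0 < r) (R : ℝ) :
    ∫⁻ t in Ioo r R, ENNReal.ofReal (ψ t * t ^ (ε - 1)) ≤
      ENNReal.ofReal (r ^ ε) * (∫⁻ t in Ioi r, ENNReal.ofReal (ψ t / t)) +
        ENNReal.ofReal (D * ε) * ∫⁻ t in Ioo r R, ENNReal.ofReal (ψ t * t ^ (ε - 1)) := by
  set g : ℝ → ℝ≥0∞ := fun t => ENNReal.ofReal (ψ t / t)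
  set c : ℝ → ℝ≥0∞ := fun s => ENNReal.ofReal (ε * s ^ (ε - 1))
  have hg : Measurable g := (hmeas.div measurable_id).ennreal_ofReal
  have hc : Measurable c := ((measurable_id.pow_const _).const_mul ε).ennreal_ofReal
  have hφ : Measurable fun t => ENNReal.ofReal (ψ t * t ^ (ε - 1)) :=
    (hmeas.mul (measurable_id.pow_const _)).ennreal_ofReal
  calc ∫⁻ t in Ioo r R, ENNReal.ofReal (ψ t * t ^ (ε - 1))
      = ∫⁻ t in Ioo r R, (ENNReal.ofReal (r ^ ε) + ∫⁻ s in Ioo r t, c s) * g t := by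
        refine setLIntegral_congr_fun measurableSet_Ioo fun t ht => ?_
        rw [ENNReal.ofReal_mul_rpow_sub_one ε (hr.trans ht.1),
          ofReal_rpow_eq_add_setLIntegral_Ioo hε hr.le ht.1.le]
    _ = ENNReal.ofReal (r ^ ε) * (∫⁻ t in Ioo r R, g t) +
          ∫⁻ s in Ioo r R, c s * ∫⁻ t in Ioo s R, g t := by
        simp_rw [add_mul]
        rw [lintegral_add_left (hg.const_mul _), lintegral_const_mul _ hg,
          setLIntegral_Ioo_lintegral_Ioo_mul_swap hc hg]
    _ ≤ ENNReal.ofReal (r ^ ε) * (∫⁻ t in Ioi r, g t) +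
          ∫⁻ s in Ioo r R, ENNReal.ofReal (D * ε) * ENNReal.ofReal (ψ s * s ^ (ε - 1)) := by
        gcongr _ * ?_ + ?_
        · exact lintegral_mono_set Ioo_subset_Ioi_self
        refine setLIntegral_mono (hφ.const_mul _) fun s hs => ?_
        have hs0 : 0 < s := hr.trans hs.1
        calc c s * ∫⁻ t in Ioo s R, g t ≤ c s * ENNReal.ofReal (D * ψ s) := by
              gcongr
              exact (lintegral_mono_set Ioo_subset_Ioi_self).trans (h s hs0)
          _ = ENNReal.ofReal (D * ε) * ENNReal.ofReal (ψ s * s ^ (ε - 1)) := by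
              have := hnn s hs0
              rw [← ENNReal.ofReal_mul (by positivity), ← ENNReal.ofReal_mul (by positivity)]
              ring_nf
    _ = _ := by rw [lintegral_const_mul _ hφ]

theorem setLIntegral_Ioo_mul_rpow_le_mul (hε : 0 < ε) (hr : 0 ≤ r) (R : ℝ) :
    ∫⁻ t in Ioo r R, ENNReal.ofReal (ψ t * t ^ (ε - 1)) ≤
      ENNReal.ofReal (R ^ ε) * ∫⁻ t in Ioi r, ENNReal.ofReal (ψ t / t) := by
  calc ∫⁻ t in Ioo r R, ENNReal.ofReal (ψ t * t ^ (ε - 1))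
      ≤ ∫⁻ t in Ioo r R, ENNReal.ofReal (R ^ ε) * ENNReal.ofReal (ψ t / t) := by
        refine setLIntegral_mono' measurableSet_Ioo fun t ht => ?_
        have ht0 : 0 < t := hr.trans_lt ht.1
        rw [ENNReal.ofReal_mul_rpow_sub_one ε ht0]
        gcongr
        exact ht.2.le
    _ ≤ ENNReal.ofReal (R ^ ε) * ∫⁻ t in Ioi r, ENNReal.ofReal (ψ t / t) := by
        rw [lintegral_const_mul' _ _ ENNReal.ofReal_ne_top]
        gcongr
        exact Ioo_subset_Ioi_self

theorem setLIntegral_Ioo_mul_rpow_le (hmeas : Measurable ψ) (hnn : ∀ t, 0 < t → 0 ≤ ψ t)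
    (hD : 0 ≤ D)
    (h : ∀ s : ℝ, 0 < s →
      ∫⁻ t in Ioi s, ENNReal.ofReal (ψ t / t) ≤ ENNReal.ofReal (D * ψ s))
    (hε : 0 < ε) (hDε : D * ε < 1) (hr : 0 < r) (R : ℝ) :
    ∫⁻ t in Ioo r R, ENNReal.ofReal (ψ t * t ^ (ε - 1)) ≤
      ENNReal.ofReal (r ^ ε / (1 - D * ε)) * ∫⁻ t in Ioi r, ENNReal.ofReal (ψ t / t) := by
  have hfin : ∫⁻ t in Ioo r R, ENNReal.ofReal (ψ t * t ^ (ε - 1)) ≠ ∞ :=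
    ne_top_of_le_ne_top
      (ENNReal.mul_ne_top ENNReal.ofReal_ne_top (ne_top_of_le_ne_top ENNReal.ofReal_ne_top (h r hr)))
      (setLIntegral_Ioo_mul_rpow_le_mul hε hr.le R)
  have := ENNReal.le_div_one_sub_of_le_add_mul (ENNReal.ofReal_lt_one.2 hDε) hfin
    (setLIntegral_Ioo_mul_rpow_le_add hmeas hnn hD h hε hr R)
  rwa [← ENNReal.ofReal_one, ← ENNReal.ofReal_sub _ (by positivity), ENNReal.mul_div_right_comm,
    ← ENNReal.ofReal_div_of_pos (by linarith)] at this

end Nakai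

theorem nakai_integral_upper_general (ψ : ℝ → ℝ) (hmeas : Measurable ψ)
    (hnn : ∀ t, 0 < t → 0 ≤ ψ t)
    (D : ℝ) (hD : 0 < D)
    (h : ∀ r : ℝ, 0 < r →
      ∫⁻ t in Set.Ioi r, ENNReal.ofReal (ψ t / t) ≤ ENNReal.ofReal (D * ψ r))
    (ε : ℝ) (hε : 0 < ε) (hεD : ε < D⁻¹) (r : ℝ) (hr : 0 < r) :
    (∫⁻ t in Set.Ioi r, ENNReal.ofReal (ψ t * t ^ (ε - 1))) ≤
        ENNReal.ofReal (r ^ ε / (1 - D * ε)) *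
          (∫⁻ t in Set.Ioi r, ENNReal.ofReal (ψ t / t)) ∧
      ENNReal.ofReal (r ^ ε / (1 - D * ε)) *
          (∫⁻ t in Set.Ioi r, ENNReal.ofReal (ψ t / t)) ≤
        ENNReal.ofReal (D / (1 - D * ε) * (ψ r * r ^ ε)) := by
  have hDε : D * ε < 1 := (lt_inv_mul_iff₀ hD).1 (by rwa [mul_one])
  refine ⟨setLIntegral_Ioi_le_of_forall_setLIntegral_Ioo_le
    (setLIntegral_Ioo_mul_rpow_le hmeas hnn hD.le h hε hDε hr), ?_⟩
  calc ENNReal.ofReal (r ^ ε / (1 - D * ε)) * ∫⁻ t in Ioi r, ENNReal.ofReal (ψ t / t)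
      ≤ ENNReal.ofReal (r ^ ε / (1 - D * ε)) * ENNReal.ofReal (D * ψ r) := by gcongr; exact h r hr
    _ = ENNReal.ofReal (D / (1 - D * ε) * (ψ r * r ^ ε)) := by
        rw [← ENNReal.ofReal_mul (by have := sub_pos.2 hDε; positivity)]
        ring_nf

/-- Nakai: if `ψ : (0,∞) → [0,∞)` is nonnegative, measurable and
locally integrable on `(0,∞)`, and `∫_r^∞ ψ(t) t⁻¹ dt ≤ D ψ(r)` for all `r>0`,
then for `0 < ε < D⁻¹` and all `r>0`,
`∫_r^∞ ψ(t) t^{ε-1} dt ≤ (r^ε/(1-Dε)) ∫_r^∞ ψ(t) t⁻¹ dt ≤ (D/(1-Dε)) ψ(r) r^ε`. -/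
theorem nakai_integral_upper (ψ : ℝ → ℝ) (hmeas : Measurable ψ)
    (hnn : ∀ t, 0 < t → 0 ≤ ψ t)
    (hloc : LocallyIntegrableOn ψ (Set.Ioi 0) volume)
    (D : ℝ) (hD : 0 < D)
    (h : ∀ r : ℝ, 0 < r →
      ∫⁻ t in Set.Ioi r, ENNReal.ofReal (ψ t / t) ≤ ENNReal.ofReal (D * ψ r))
    (ε : ℝ) (hε : 0 < ε) (hεD : ε < D⁻¹) (r : ℝ) (hr : 0 < r) :
    (∫⁻ t in Set.Ioi r, ENNReal.ofReal (ψ t * t ^ (ε - 1))) ≤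
        ENNReal.ofReal (r ^ ε / (1 - D * ε)) *
          (∫⁻ t in Set.Ioi r, ENNReal.ofReal (ψ t / t)) ∧
      ENNReal.ofReal (r ^ ε / (1 - D * ε)) *
          (∫⁻ t in Set.Ioi r, ENNReal.ofReal (ψ t / t)) ≤
        ENNReal.ofReal (D / (1 - D * ε) * (ψ r * r ^ ε)) :=
  nakai_integral_upper_general ψ hmeas hnn D hD h ε hε hεD r hr
end

section
/- Let ψ:(0,∞)→(0,∞) be measurable and let D>0 satisfy ∫_0^r ψ(t)·t^{−1} dt ≤ D·ψ(r) for all r>0. Then for every ε with 0<ε<D^{−1} and every r>0, ∫_0^r ψ(t)·t^{−1−ε} dt ≤ (1/(1−Dε))·r^{−ε}·∫_0^r ψ(t)·t^{−1} dt ≤ (D/(1−Dε))·r^{−ε}·ψ(r). -/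
/-!
Write `ψ(t) t^{-1-ε} = (ψ(t)/t) · t^{-ε}` and expand
`t^{-ε} = r^{-ε} + ∫_t^r ε s^{-1-ε} ds`. After Tonelli the double integral is
`∫_a^r ε s^{-1-ε} (∫_a^s ψ(t)/t dt) ds ≤ Dε ∫_a^r ψ(s) s^{-1-ε} ds`, so
`I_a := ∫_a^r ψ(t) t^{-1-ε} dt` satisfies `I_a ≤ r^{-ε} ∫_0^r ψ(t)/t dt + Dε I_a`.
For `a > 0` the integral `I_a` is finite, so this can be solved for `I_a` since `Dε < 1`;
letting `a → 0` gives the bound on `(0, r]`.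
-/

open MeasureTheory Set
open scoped ENNReal NNReal

theorem ENNReal.le_ofReal_one_div_one_sub_mul {x b : ℝ≥0∞} {c : ℝ} (hx : x ≠ ∞)
    (hc₀ : 0 ≤ c) (hc₁ : c < 1) (h : x ≤ b + ENNReal.ofReal c * x) :
    x ≤ ENNReal.ofReal (1 / (1 - c)) * b := by
  have hc : 0 < 1 - c := sub_pos.2 hc₁
  rcases eq_or_ne b ∞ with rfl | hb
  · rw [ENNReal.mul_top (ENNReal.ofReal_pos.2 (by positivity)).ne']
    exact le_top
  lift x to ℝ≥0 using hx
  lift b to ℝ≥0 using hb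
  have hreal : (x : ℝ) ≤ b + c * x := by
    rw [← ENNReal.ofReal_coe_nnreal (p := x), ← ENNReal.ofReal_coe_nnreal (p := b),
      ← ENNReal.ofReal_mul hc₀, ← ENNReal.ofReal_add (by positivity) (by positivity)] at h
    exact (ENNReal.ofReal_le_ofReal_iff (by positivity)).1 h
  rw [← ENNReal.ofReal_coe_nnreal (p := x), ← ENNReal.ofReal_coe_nnreal (p := b),
    ← ENNReal.ofReal_mul (by positivity)]
  apply ENNReal.ofReal_le_ofReal
  rw [one_div_mul_eq_div, le_div_iff₀ hc]
  linarith

theorem setLIntegral_Ioc_le_of_forall_lt {μ : Measure ℝ} {f : ℝ → ℝ≥0∞} {b r : ℝ} {C : ℝ≥0∞}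
    (h : ∀ a, b < a → ∫⁻ x in Ioc a r, f x ∂μ ≤ C) : ∫⁻ x in Ioc b r, f x ∂μ ≤ C := by
  have hunion : ⋃ n : ℕ, Ioc (b + 1 / (n + 1)) r = Ioc b r := by
    ext x
    simp only [mem_iUnion, mem_Ioc]
    constructor
    · rintro ⟨n, hn, hxr⟩
      exact ⟨lt_of_le_of_lt (le_add_of_nonneg_right (by positivity)) hn, hxr⟩
    · rintro ⟨hbx, hxr⟩
      obtain ⟨n, hn⟩ := exists_nat_one_div_lt (sub_pos.2 hbx)
      exact ⟨n, by linarith, hxr⟩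
  have hdir : Directed (· ⊆ ·) fun n : ℕ => Ioc (b + 1 / (n + 1)) r := by
    refine Monotone.directed_le fun m n hmn => Ioc_subset_Ioc_left ?_
    gcongr
  rw [← hunion, setLIntegral_iUnion_of_directed _ hdir]
  exact iSup_le fun n => h _ (lt_add_of_pos_right _ (by positivity))

theorem Real.rpow_neg_one_sub {t : ℝ} (ht : 0 < t) (ε : ℝ) : t ^ (-1 - ε) = t⁻¹ * t ^ (-ε) := by
  rw [sub_eq_add_neg, Real.rpow_add ht, Real.rpow_neg_one]

theorem ofReal_rpow_neg_eq_add_lintegral {ε t r : ℝ} (hε : 0 < ε) (ht : 0 < t) (htr : t ≤ r) :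
    ENNReal.ofReal (t ^ (-ε)) =
      ENNReal.ofReal (r ^ (-ε)) + ∫⁻ s in Ioc t r, ENNReal.ofReal (ε * s ^ (-1 - ε)) := by
  have hcont : ContinuousOn (fun s : ℝ => ε * s ^ (-1 - ε)) (Icc t r) :=
    continuousOn_const.mul <| continuousOn_id.rpow_const fun s hs => Or.inl (ht.trans_le hs.1).ne'
  have hint : ∫ s in t..r, ε * s ^ (-1 - ε) = t ^ (-ε) - r ^ (-ε) := by
    rw [intervalIntegral.integral_const_mul, integral_rpow (Or.inr ⟨by linarith, ?_⟩)]
    · rw [show -1 - ε + 1 = -ε by ring]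
      field_simp
      ring
    · rw [uIcc_of_le htr]; exact fun h0 => ht.not_ge h0.1
  rw [← ofReal_integral_eq_lintegral_ofReal (hcont.integrableOn_Icc.mono_set Ioc_subset_Icc_self),
    ← intervalIntegral.integral_of_le htr, hint,
    ← ENNReal.ofReal_add (Real.rpow_nonneg (ht.le.trans htr) _), add_sub_cancel]
  · rw [sub_nonneg]; exact Real.rpow_le_rpow_of_nonpos ht htr (by linarith)
  · filter_upwards [ae_restrict_mem measurableSet_Ioc] with s hs
    have : 0 < s := ht.trans hs.1
    positivity

theorem lintegral_Ioc_mul_lintegral_Ioc {μ : Measure ℝ} [SFinite μ] {f g : ℝ → ℝ≥0∞}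
    (hf : Measurable f) (hg : Measurable g) (a r : ℝ) :
    ∫⁻ t in Ioc a r, f t * ∫⁻ s in Ioc t r, g s ∂μ ∂μ =
      ∫⁻ s in Ioc a r, (∫⁻ t in Ioo a s, f t ∂μ) * g s ∂μ := by
  have hF : Measurable (Function.uncurry fun t s : ℝ => if t < s then f t * g s else 0) :=
    Measurable.ite (measurableSet_lt measurable_fst measurable_snd)
      ((hf.comp measurable_fst).mul (hg.comp measurable_snd)) measurable_const
  calc ∫⁻ t in Ioc a r, f t * ∫⁻ s in Ioc t r, g s ∂μ ∂μ
      = ∫⁻ t in Ioc a r, ∫⁻ s in Ioc a r, (if t < s then f t * g s else 0) ∂μ ∂μ := by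
        refine setLIntegral_congr_fun measurableSet_Ioc fun t ht => ?_
        have hI : Ioi t ∩ Ioc a r = Ioc t r := by
          rw [inter_comm, Ioc_inter_Ioi, sup_eq_right.2 ht.1.le]
        have hite : ∀ s, (if t < s then f t * g s else 0) = (Ioi t).indicator (f t * g ·) s :=
          fun s => by simp [indicator_apply]
        simp_rw [hite, setLIntegral_indicator measurableSet_Ioi, hI, lintegral_const_mul _ hg]
    _ = ∫⁻ s in Ioc a r, ∫⁻ t in Ioc a r, (if t < s then f t * g s else 0) ∂μ ∂μ :=
        lintegral_lintegral_swap hF.aemeasurable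
    _ = ∫⁻ s in Ioc a r, (∫⁻ t in Ioo a s, f t ∂μ) * g s ∂μ := by
        refine setLIntegral_congr_fun measurableSet_Ioc fun s hs => ?_
        have hI : Iio s ∩ Ioc a r = Ioo a s := by
          ext t
          simp only [mem_inter_iff, mem_Iio, mem_Ioc, mem_Ioo]
          exact ⟨fun h => ⟨h.2.1, h.1⟩, fun h => ⟨h.2, h.1, h.2.le.trans hs.2⟩⟩
        have hite : ∀ t, (if t < s then f t * g s else 0) = (Iio s).indicator (f · * g s) t :=
          fun t => by simp [indicator_apply]
        simp_rw [hite, setLIntegral_indicator measurableSet_Iio, hI, lintegral_mul_const _ hf]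

section
variable {ψ : ℝ → ℝ} {D ε a r : ℝ}

theorem lintegral_Ioc_mul_rpow_le (hε : 0 ≤ ε) (ha : 0 < a) :
    ∫⁻ t in Ioc a r, ENNReal.ofReal (ψ t * t ^ (-1 - ε)) ≤
      ENNReal.ofReal (a ^ (-ε)) * ∫⁻ t in Ioc 0 r, ENNReal.ofReal (ψ t / t) := by
  rw [← lintegral_const_mul' _ _ ENNReal.ofReal_ne_top]
  refine (setLIntegral_mono_ae' measurableSet_Ioc (.of_forall fun t ht => ?_)).trans
    (lintegral_mono_set (Ioc_subset_Ioc_left ha.le))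
  have ht₀ : 0 < t := ha.trans ht.1
  rw [Real.rpow_neg_one_sub ht₀, ← mul_assoc, ← div_eq_mul_inv,
    ENNReal.ofReal_mul' (Real.rpow_nonneg ht₀.le _), mul_comm]
  exact mul_le_mul_left
    (ENNReal.ofReal_le_ofReal (Real.rpow_le_rpow_of_nonpos ha ht.1.le (neg_nonpos.2 hε))) _

theorem lintegral_Ioc_mul_rpow_le_add_mul_self (hψ : Measurable ψ) (hD : 0 ≤ D) (hε : 0 < ε)
    (ha : 0 ≤ a)
    (h : ∀ s ∈ Ioc a r, ∫⁻ t in Ioc 0 s, ENNReal.ofReal (ψ t / t) ≤ ENNReal.ofReal (D * ψ s)) :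
    ∫⁻ t in Ioc a r, ENNReal.ofReal (ψ t * t ^ (-1 - ε)) ≤
      ENNReal.ofReal (r ^ (-ε)) * (∫⁻ t in Ioc 0 r, ENNReal.ofReal (ψ t / t)) +
        ENNReal.ofReal (D * ε) * ∫⁻ t in Ioc a r, ENNReal.ofReal (ψ t * t ^ (-1 - ε)) := by
  set w : ℝ → ℝ≥0∞ := fun t => ENNReal.ofReal (ψ t / t)
  set g : ℝ → ℝ≥0∞ := fun s => ENNReal.ofReal (ε * s ^ (-1 - ε))
  have hw : Measurable w := (hψ.div measurable_id).ennreal_ofReal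
  have hg : Measurable g := (measurable_const.mul (measurable_id.pow_const _)).ennreal_ofReal
  have hf : Measurable fun t => ENNReal.ofReal (ψ t * t ^ (-1 - ε)) :=
    (hψ.mul (measurable_id.pow_const _)).ennreal_ofReal
  have hsplit : ∀ t ∈ Ioc a r, ENNReal.ofReal (ψ t * t ^ (-1 - ε)) =
      w t * ENNReal.ofReal (r ^ (-ε)) + w t * ∫⁻ s in Ioc t r, g s := fun t ht => by
    have ht₀ : 0 < t := ha.trans_lt ht.1
    rw [Real.rpow_neg_one_sub ht₀, ← mul_assoc, ← div_eq_mul_inv,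
      ENNReal.ofReal_mul' (Real.rpow_nonneg ht₀.le _),
      ofReal_rpow_neg_eq_add_lintegral hε ht₀ ht.2, mul_add]
  have hkey : ∀ s ∈ Ioc a r, (∫⁻ t in Ioo a s, w t) * g s ≤
      ENNReal.ofReal (D * ε) * ENNReal.ofReal (ψ s * s ^ (-1 - ε)) := fun s hs => by
    have hs₀ : 0 < s := ha.trans_lt hs.1
    calc (∫⁻ t in Ioo a s, w t) * g s ≤ ENNReal.ofReal (D * ψ s) * g s := by
          gcongr
          exact (lintegral_mono_set (Ioo_subset_Ioc_self.trans (Ioc_subset_Ioc_left ha))).trans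
            (h s hs)
      _ = ENNReal.ofReal (D * ε) * ENNReal.ofReal (ψ s * s ^ (-1 - ε)) := by
          rw [← ENNReal.ofReal_mul' (by positivity), ← ENNReal.ofReal_mul (by positivity)]
          ring_nf
  calc ∫⁻ t in Ioc a r, ENNReal.ofReal (ψ t * t ^ (-1 - ε))
      = ∫⁻ t in Ioc a r, w t * ENNReal.ofReal (r ^ (-ε)) + w t * ∫⁻ s in Ioc t r, g s :=
        setLIntegral_congr_fun measurableSet_Ioc hsplit
    _ = (∫⁻ t in Ioc a r, w t) * ENNReal.ofReal (r ^ (-ε)) +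
          ∫⁻ s in Ioc a r, (∫⁻ t in Ioo a s, w t) * g s := by
        rw [lintegral_add_left (hw.mul_const _), lintegral_mul_const _ hw,
          lintegral_Ioc_mul_lintegral_Ioc hw hg]
    _ ≤ (∫⁻ t in Ioc 0 r, w t) * ENNReal.ofReal (r ^ (-ε)) +
          ∫⁻ s in Ioc a r, ENNReal.ofReal (D * ε) * ENNReal.ofReal (ψ s * s ^ (-1 - ε)) := by
        gcongr ?_ * _ + ?_
        · exact lintegral_mono_set (Ioc_subset_Ioc_left ha)
        · exact setLIntegral_mono_ae' measurableSet_Ioc (.of_forall hkey)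
    _ = _ := by rw [lintegral_const_mul _ hf, mul_comm]

end

theorem nakai_integral_lower_general (ψ : ℝ → ℝ) (hmeas : Measurable ψ)
    (D : ℝ) (hD : 0 < D)
    (h : ∀ r : ℝ, 0 < r →
      ∫⁻ t in Set.Ioc 0 r, ENNReal.ofReal (ψ t / t) ≤ ENNReal.ofReal (D * ψ r))
    (ε : ℝ) (hε : 0 < ε) (hεD : ε < D⁻¹) (r : ℝ) (hr : 0 < r) :
    (∫⁻ t in Set.Ioc 0 r, ENNReal.ofReal (ψ t * t ^ (-1 - ε))) ≤
        ENNReal.ofReal (1 / (1 - D * ε) * r ^ (-ε)) *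
          (∫⁻ t in Set.Ioc 0 r, ENNReal.ofReal (ψ t / t)) ∧
      ENNReal.ofReal (1 / (1 - D * ε) * r ^ (-ε)) *
          (∫⁻ t in Set.Ioc 0 r, ENNReal.ofReal (ψ t / t)) ≤
        ENNReal.ofReal (D / (1 - D * ε) * (r ^ (-ε) * ψ r)) := by
  have hDε : D * ε < 1 := (lt_inv_mul_iff₀ hD).1 (by rwa [mul_one])
  have hc : 0 < 1 - D * ε := sub_pos.2 hDε
  have hW := h r hr
  refine ⟨?_, ?_⟩
  · rw [ENNReal.ofReal_mul (by positivity), mul_assoc]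
    refine setLIntegral_Ioc_le_of_forall_lt fun a ha => ?_
    have hfin : ∫⁻ t in Ioc a r, ENNReal.ofReal (ψ t * t ^ (-1 - ε)) ≠ ∞ :=
      ne_top_of_le_ne_top (ENNReal.mul_ne_top ENNReal.ofReal_ne_top (ne_top_of_le_ne_top
        ENNReal.ofReal_ne_top hW)) (lintegral_Ioc_mul_rpow_le hε.le ha)
    exact ENNReal.le_ofReal_one_div_one_sub_mul hfin (by positivity) hDε
      (lintegral_Ioc_mul_rpow_le_add_mul_self hmeas hD.le hε ha.le fun s hs => h s (ha.trans hs.1))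
  · calc ENNReal.ofReal (1 / (1 - D * ε) * r ^ (-ε)) *
          (∫⁻ t in Set.Ioc 0 r, ENNReal.ofReal (ψ t / t))
        ≤ ENNReal.ofReal (1 / (1 - D * ε) * r ^ (-ε)) * ENNReal.ofReal (D * ψ r) := by gcongr
      _ = ENNReal.ofReal (D / (1 - D * ε) * (r ^ (-ε) * ψ r)) := by
        rw [← ENNReal.ofReal_mul (by positivity)]
        ring_nf

/-- Nakai: if `ψ : (0,∞) → (0,∞)` is positive and measurable and
`∫_0^r ψ(t) t⁻¹ dt ≤ D ψ(r)` for all `r>0`, then for `0 < ε < D⁻¹` and all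
`r>0`, `∫_0^r ψ(t) t^{-1-ε} dt ≤ (1/(1-Dε)) r^{-ε} ∫_0^r ψ(t) t⁻¹ dt
≤ (D/(1-Dε)) r^{-ε} ψ(r)`. -/
theorem nakai_integral_lower (ψ : ℝ → ℝ) (hmeas : Measurable ψ)
    (hpos : ∀ t, 0 < t → 0 < ψ t)
    (D : ℝ) (hD : 0 < D)
    (h : ∀ r : ℝ, 0 < r →
      ∫⁻ t in Set.Ioc 0 r, ENNReal.ofReal (ψ t / t) ≤ ENNReal.ofReal (D * ψ r))
    (ε : ℝ) (hε : 0 < ε) (hεD : ε < D⁻¹) (r : ℝ) (hr : 0 < r) :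
    (∫⁻ t in Set.Ioc 0 r, ENNReal.ofReal (ψ t * t ^ (-1 - ε))) ≤
        ENNReal.ofReal (1 / (1 - D * ε) * r ^ (-ε)) *
          (∫⁻ t in Set.Ioc 0 r, ENNReal.ofReal (ψ t / t)) ∧
      ENNReal.ofReal (1 / (1 - D * ε) * r ^ (-ε)) *
          (∫⁻ t in Set.Ioc 0 r, ENNReal.ofReal (ψ t / t)) ≤
        ENNReal.ofReal (D / (1 - D * ε) * (r ^ (-ε) * ψ r)) :=
  nakai_integral_lower_general ψ hmeas D hD h ε hε hεD r hr
end
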